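/- arXiv:2002.05861 — 4 statements merged into one kernel-verified Lean document; each statement's English description precedes it below -/
import Mathlib

section
/- For all n ≥ 1, the coefficient of h ζ^n in the expansion of ((1+2h)/(1-h)) · (1+ζ)^{n+1} · ((1-ζ+2h)/(1+ζ-h))^{n-1} (as a power series in h and ζ, truncated modulo h^2) equals (-1)^n (4n - 10). -/
open MvPowerSeries

lemma fin2_decomp (f : Fin 2 →₀ ℕ) :
    Finsupp.single (0:Fin 2) (f 0) + Finsupp.single 1 (f 1) = f := by
  ext x; fin_cases x <;> simp [Finsupp.single_apply]

lemma sum_antidiag_split (d : Fin 2 →₀ ℕ) (F : (Fin 2 →₀ ℕ) × (Fin 2 →₀ ℕ) → ℚ) :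
    ∑ p ∈ Finset.HasAntidiagonal.antidiagonal d, F p
    = ∑ q ∈ Finset.HasAntidiagonal.antidiagonal (d 0) ×ˢ Finset.HasAntidiagonal.antidiagonal (d 1),
        F (Finsupp.single 0 q.1.1 + Finsupp.single 1 q.2.1,
           Finsupp.single 0 q.1.2 + Finsupp.single 1 q.2.2) := by
  refine Finset.sum_nbij' (fun p => ((p.1 0, p.2 0), (p.1 1, p.2 1)))
    (fun q => (Finsupp.single 0 q.1.1 + Finsupp.single 1 q.2.1,
               Finsupp.single 0 q.1.2 + Finsupp.single 1 q.2.2)) ?_ ?_ ?_ ?_ ?_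
  · intro p hp
    rw [Finset.HasAntidiagonal.mem_antidiagonal] at hp
    simp only [Finset.mem_product, Finset.HasAntidiagonal.mem_antidiagonal]
    constructor
    · rw [← hp]; simp
    · rw [← hp]; simp
  · intro q hq
    simp only [Finset.mem_product, Finset.HasAntidiagonal.mem_antidiagonal] at hq
    rw [Finset.HasAntidiagonal.mem_antidiagonal]
    ext x; fin_cases x <;> simp [Finsupp.single_apply, hq.1, hq.2]
  · intro p hp
    ext1 <;> exact fin2_decomp _
  · intro q hq
    simp [Finsupp.single_apply]
  · intro p hp
    congr 1
    ext1 <;> exact (fin2_decomp _).symm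



lemma d1_ne_zero (k : ℕ) : (Finsupp.single (0:Fin 2) 1 + Finsupp.single 1 k) ≠ 0 := by
  intro h
  rw [Finsupp.ext_iff] at h
  have := h 0
  simp [Finsupp.single_apply] at this

lemma d0_eval0 (k : ℕ) : (Finsupp.single (1:Fin 2) k : Fin 2 →₀ ℕ) 0 = 0 := by
  simp [Finsupp.single_apply]
lemma d0_eval1 (k : ℕ) : (Finsupp.single (1:Fin 2) k : Fin 2 →₀ ℕ) 1 = k := by simp
lemma d1_eval0 (k : ℕ) :
    ((Finsupp.single (0:Fin 2) 1 + Finsupp.single 1 k : Fin 2 →₀ ℕ)) 0 = 1 := by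
  simp [Finsupp.single_apply]
lemma d1_eval1 (k : ℕ) :
    ((Finsupp.single (0:Fin 2) 1 + Finsupp.single 1 k : Fin 2 →₀ ℕ)) 1 = k := by
  simp [Finsupp.single_apply]

open TrivSqZeroExt in
noncomputable def phi : MvPowerSeries (Fin 2) ℚ →+* PowerSeries (DualNumber ℚ) where
  toFun f := PowerSeries.mk fun k =>
    inl (coeff (Finsupp.single 1 k) f)
      + inr (coeff (Finsupp.single 0 1 + Finsupp.single 1 k) f)
  map_one' := by
    ext k
    · simp only [PowerSeries.coeff_mk, MvPowerSeries.coeff_one, PowerSeries.coeff_one,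
        fst_add, fst_inl, fst_inr, add_zero, Finsupp.single_eq_zero]
      split_ifs <;> simp
    · simp only [PowerSeries.coeff_mk, MvPowerSeries.coeff_one, PowerSeries.coeff_one,
        snd_add, snd_inl, snd_inr, zero_add, if_neg (d1_ne_zero k)]
      split_ifs <;> simp
  map_mul' := by
    intro f g
    ext k
    · simp only [PowerSeries.coeff_mk, PowerSeries.coeff_mul, MvPowerSeries.coeff_mul,
        fst_add, fst_inl, fst_inr, add_zero, fst_sum, fst_mul]
      rw [sum_antidiag_split, Finset.sum_product, d0_eval0, d0_eval1,
        Finset.HasAntidiagonal.antidiagonal_zero, Finset.sum_singleton]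
      simp only [Finsupp.single_zero, zero_add]
    · simp only [PowerSeries.coeff_mk, PowerSeries.coeff_mul, MvPowerSeries.coeff_mul,
        snd_add, snd_inl, snd_inr, zero_add, snd_sum, snd_mul,
        fst_add, fst_inl, fst_inr, add_zero, smul_eq_mul,
        MulOpposite.smul_eq_mul_unop, MulOpposite.unop_op]
      rw [sum_antidiag_split, Finset.sum_product, d1_eval0, d1_eval1,
        Finset.Nat.sum_antidiagonal_eq_sum_range_succ_mk, Finset.sum_range_succ,
        Finset.sum_range_one]
      simp only [Nat.sub_zero, Nat.sub_self, Finsupp.single_zero, zero_add, add_zero,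
        Finset.sum_add_distrib]
  map_zero' := by
    ext k <;> simp
  map_add' := by
    intro f g
    ext k <;> simp

noncomputable def iot : PowerSeries ℚ →+* PowerSeries (DualNumber ℚ) :=
  PowerSeries.map (TrivSqZeroExt.inlHom ℚ ℚ)

noncomputable def ee : PowerSeries (DualNumber ℚ) := PowerSeries.C DualNumber.eps

lemma ee_sq : ee * ee = 0 := by
  rw [ee, ← map_mul, DualNumber.eps_mul_eps, map_zero]

lemma phi_apply (f : MvPowerSeries (Fin 2) ℚ) :
    phi f = PowerSeries.mk fun k =>
      TrivSqZeroExt.inl (coeff (Finsupp.single 1 k) f)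
        + TrivSqZeroExt.inr (coeff (Finsupp.single 0 1 + Finsupp.single 1 k) f) := rfl

lemma phi_snd (f : MvPowerSeries (Fin 2) ℚ) (k : ℕ) :
    TrivSqZeroExt.snd (PowerSeries.coeff k (phi f))
      = coeff (Finsupp.single 0 1 + Finsupp.single 1 k) f := by
  simp [phi_apply]

lemma snd_coeff_iot (P Q : PowerSeries ℚ) (k : ℕ) :
    TrivSqZeroExt.snd (PowerSeries.coeff k (iot P + ee * iot Q))
      = PowerSeries.coeff k Q := by
  rw [ee, map_add, PowerSeries.coeff_C_mul, TrivSqZeroExt.snd_add]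
  simp only [iot, PowerSeries.coeff_map]
  rw [TrivSqZeroExt.inlHom_apply, TrivSqZeroExt.inlHom_apply, TrivSqZeroExt.snd_inl,
    DualNumber.eps, TrivSqZeroExt.snd_mul]
  simp

lemma phi_X0 : phi (X 0 : MvPowerSeries (Fin 2) ℚ) = ee := by
  ext k
  · simp [phi_apply, ee, MvPowerSeries.coeff_X, PowerSeries.coeff_C]
    intro h
    exfalso
    rw [Finsupp.ext_iff] at h
    have := h 0
    simp [Finsupp.single_apply] at this
  · simp only [phi_apply, PowerSeries.coeff_mk, TrivSqZeroExt.snd_add,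
      TrivSqZeroExt.snd_inl, TrivSqZeroExt.snd_inr, zero_add, ee, PowerSeries.coeff_C,
      MvPowerSeries.coeff_X, DualNumber.eps, TrivSqZeroExt.snd_inr]
    rcases Nat.eq_zero_or_pos k with rfl | hk
    · simp
    · rw [if_neg, if_neg (by omega)]
      · simp
      · intro h
        rw [Finsupp.ext_iff] at h
        have := h 1
        simp [Finsupp.single_apply] at this
        omega

lemma phi_X1 : phi (X 1 : MvPowerSeries (Fin 2) ℚ) = PowerSeries.X := by
  ext k
  · simp only [phi_apply, PowerSeries.coeff_mk, TrivSqZeroExt.fst_add,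
      TrivSqZeroExt.fst_inl, TrivSqZeroExt.fst_inr, add_zero,
      MvPowerSeries.coeff_X, PowerSeries.coeff_X]
    by_cases hk : k = 1
    · subst hk; simp
    · have hne : ¬ (Finsupp.single (1 : Fin 2) k = Finsupp.single 1 1) := by
        intro h
        rw [Finsupp.ext_iff] at h
        have := h 1
        simp [Finsupp.single_apply] at this
        omega
      rw [if_neg hne, if_neg hk]
      simp
  · simp only [phi_apply, PowerSeries.coeff_mk, TrivSqZeroExt.snd_add,
      TrivSqZeroExt.snd_inl, TrivSqZeroExt.snd_inr, zero_add,
      MvPowerSeries.coeff_X, PowerSeries.coeff_X]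
    rw [if_neg]
    · split_ifs <;> simp
    · intro h
      rw [Finsupp.ext_iff] at h
      have := h 0
      simp [Finsupp.single_apply] at this

lemma mul_eps_trick {S : Type*} [CommRing S] {e : S} (he : e * e = 0) (x u y v : S) :
    (x + e * u) * (y + e * v) = x * y + e * (x * v + u * y) := by
  linear_combination (u * v) * he

lemma pow_eps (a b : PowerSeries ℚ) (m : ℕ) :
    (iot a + ee * iot b) ^ m
      = iot (a ^ m) + ee * iot ((m : PowerSeries ℚ) * b * a ^ (m - 1)) := by
  induction m with
  | zero => simp
  | succ m ih =>
    rw [pow_succ, ih, mul_eps_trick ee_sq, ← map_mul, ← map_mul, ← map_mul, ← map_add,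
      ← pow_succ]
    congr 3
    cases m with
    | zero => simp
    | succ l =>
      show a ^ (l + 1) * b + (↑(l + 1) : PowerSeries ℚ) * b * a ^ (l + 1 - 1) * a
          = (↑(l + 1 + 1) : PowerSeries ℚ) * b * a ^ (l + 1 + 1 - 1)
      have h1 : l + 1 - 1 = l := rfl
      have h2 : l + 1 + 1 - 1 = l + 1 := rfl
      rw [h1, h2]
      push_cast
      ring

lemma coeff_one_sub_X_pow (m k : ℕ) :
    PowerSeries.coeff k ((1 - PowerSeries.X) ^ m) = (-1) ^ k * (m.choose k : ℚ) := by
  induction m generalizing k with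
  | zero =>
    cases k with
    | zero => simp
    | succ k => simp [PowerSeries.coeff_one]
  | succ m ih =>
    have hx : (1 - PowerSeries.X : PowerSeries ℚ) ^ (m + 1)
        = (1 - PowerSeries.X) ^ m - PowerSeries.X * (1 - PowerSeries.X) ^ m := by ring
    rw [hx, map_sub, ih]
    cases k with
    | zero =>
      simp
    | succ k =>
      rw [PowerSeries.coeff_succ_X_mul, ih, Nat.choose_succ_succ]
      push_cast
      ring

lemma combine_lemma (c p q : PowerSeries ℚ) :
    (1 + 2 * ee) * (1 + ee) * iot c * (iot p + ee * iot q)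
      = iot (c * p) + ee * iot (3 * (c * p) + c * q) := by
  simp only [map_mul, map_add, map_ofNat]
  linear_combination (2 * iot c * iot p + 3 * iot c * iot q + 2 * ee * iot c * iot q) * ee_sq

set_option maxHeartbeats 2000000 in
/-- For `n ≥ 1`, the coefficient of `h ζ^n` in
`((1+2h)/(1-h)) (1+ζ)^{n+1} ((1-ζ+2h)/(1+ζ-h))^{n-1}` equals `(-1)^n (4n - 10)`.
Here `h = X 0` and `ζ = X 1` in `ℚ[[h, ζ]]`, and inverses are formal power series
inverses. -/
theorem example_coefficient_computation (n : ℕ) (hn : 1 ≤ n) :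
    MvPowerSeries.coeff (Finsupp.single (0 : Fin 2) 1 + Finsupp.single (1 : Fin 2) n)
      ((1 + 2 * (X 0 : MvPowerSeries (Fin 2) ℚ)) * (1 - (X 0 : MvPowerSeries (Fin 2) ℚ))⁻¹ *
        (1 + (X 1 : MvPowerSeries (Fin 2) ℚ)) ^ (n + 1) *
        ((1 - (X 1 : MvPowerSeries (Fin 2) ℚ) + 2 * (X 0 : MvPowerSeries (Fin 2) ℚ)) *
            (1 + (X 1 : MvPowerSeries (Fin 2) ℚ) - (X 0 : MvPowerSeries (Fin 2) ℚ))⁻¹) ^ (n - 1))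
      = (-1 : ℚ) ^ n * (4 * n - 10) := by
  classical
  -- inverses multiply to 1
  have hUinv : ((1 : MvPowerSeries (Fin 2) ℚ) - X 0) * (1 - X 0)⁻¹ = 1 :=
    MvPowerSeries.mul_inv_cancel _ (by simp)
  have hVinv : ((1 : MvPowerSeries (Fin 2) ℚ) + X 1 - X 0) * (1 + X 1 - X 0)⁻¹ = 1 :=
    MvPowerSeries.mul_inv_cancel _ (by simp)
  have hA : phi ((1 - X 0 : MvPowerSeries (Fin 2) ℚ)⁻¹) = 1 + ee := by
    have h2 := congrArg phi hUinv
    rw [map_mul, map_sub, map_one, phi_X0] at h2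
    have h3 : ((1 : PowerSeries (DualNumber ℚ)) + ee) * (1 - ee) = 1 := by
      linear_combination -ee_sq
    calc phi ((1 - X 0 : MvPowerSeries (Fin 2) ℚ)⁻¹)
        = ((1 + ee) * (1 - ee)) * phi ((1 - X 0 : MvPowerSeries (Fin 2) ℚ)⁻¹) := by
          rw [h3, one_mul]
      _ = (1 + ee) * ((1 - ee) * phi ((1 - X 0 : MvPowerSeries (Fin 2) ℚ)⁻¹)) := by ring
      _ = 1 + ee := by rw [h2, mul_one]
  -- J and W
  set J : PowerSeries ℚ := (1 + PowerSeries.X)⁻¹ with hJdef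
  have hJ : ((1 : PowerSeries ℚ) + PowerSeries.X) * J = 1 :=
    PowerSeries.mul_inv_cancel _ (by simp)
  have hiot1X : iot (1 + PowerSeries.X) = 1 + PowerSeries.X := by
    rw [map_add, map_one, iot, PowerSeries.map_X]
  have hiot1mX : iot (1 - PowerSeries.X) = 1 - PowerSeries.X := by
    rw [map_sub, map_one, iot, PowerSeries.map_X]
  set W : PowerSeries (DualNumber ℚ) := iot J + ee * iot (J ^ 2) with hW
  have hUW : ((1 : PowerSeries (DualNumber ℚ)) + PowerSeries.X - ee) * W = 1 := by
    have e1 : ((1 : PowerSeries (DualNumber ℚ)) + PowerSeries.X - ee) * W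
        = iot ((1 + PowerSeries.X) * J)
          + ee * (iot ((1 + PowerSeries.X) * (J ^ 2)) - iot J) := by
      rw [hW, ← hiot1X, map_mul (f := iot), map_mul (f := iot)]
      linear_combination (-(iot (J ^ 2))) * ee_sq
    have e2 : (1 + PowerSeries.X) * J ^ 2 = ((1 + PowerSeries.X) * J) * J := by ring
    rw [e1, hJ, e2, hJ, one_mul, map_one, sub_self, mul_zero, add_zero]
  have hB : phi ((1 + X 1 - X 0 : MvPowerSeries (Fin 2) ℚ)⁻¹) = W := by
    have h2 := congrArg phi hVinv
    rw [map_mul, map_sub, map_add, map_one, phi_X0, phi_X1] at h2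
    calc phi ((1 + X 1 - X 0 : MvPowerSeries (Fin 2) ℚ)⁻¹)
        = (((1 : PowerSeries (DualNumber ℚ)) + PowerSeries.X - ee) * W)
            * phi ((1 + X 1 - X 0 : MvPowerSeries (Fin 2) ℚ)⁻¹) := by rw [hUW, one_mul]
      _ = W * (((1 : PowerSeries (DualNumber ℚ)) + PowerSeries.X - ee)
            * phi ((1 + X 1 - X 0 : MvPowerSeries (Fin 2) ℚ)⁻¹)) := by ring
      _ = W := by rw [h2, mul_one]
  set A : PowerSeries ℚ := (1 - PowerSeries.X) * J with hAdef
  set B : PowerSeries ℚ := (1 - PowerSeries.X) * J ^ 2 + 2 * J with hBdef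
  have hfac : ((1 : PowerSeries (DualNumber ℚ)) - PowerSeries.X + 2 * ee) * W
      = iot A + ee * iot B := by
    rw [hW, hAdef, hBdef, ← hiot1mX, map_mul (f := iot), map_add (f := iot),
      map_mul (f := iot), map_mul (f := iot), map_ofNat]
    linear_combination (2 * iot (J ^ 2)) * ee_sq
  -- push phi through the expression
  have g1 : phi (1 + 2 * X 0) = 1 + 2 * ee := by
    rw [map_add, map_one, map_mul, map_ofNat, phi_X0]
  have g3 : phi (1 + X 1 : MvPowerSeries (Fin 2) ℚ) = 1 + PowerSeries.X := by
    rw [map_add, map_one, phi_X1]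
  have g4 : phi ((1 - X 1 + 2 * X 0 : MvPowerSeries (Fin 2) ℚ)
        * (1 + X 1 - X 0)⁻¹) = iot A + ee * iot B := by
    rw [map_mul, map_add, map_sub, map_one, map_mul, map_ofNat, phi_X0, phi_X1, hB, hfac]
  have hphiE : phi ((1 + 2 * X 0) * (1 - X 0)⁻¹ * (1 + X 1) ^ (n + 1) *
        ((1 - X 1 + 2 * X 0) * (1 + X 1 - X 0)⁻¹) ^ (n - 1))
      = iot ((1 + PowerSeries.X) ^ (n + 1) * A ^ (n - 1))
        + ee * iot (3 * ((1 + PowerSeries.X) ^ (n + 1) * A ^ (n - 1))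
            + (1 + PowerSeries.X) ^ (n + 1)
              * (((n - 1 : ℕ) : PowerSeries ℚ) * B * A ^ (n - 1 - 1))) := by
    rw [map_mul (f := phi), map_mul (f := phi), map_mul (f := phi), map_pow (f := phi),
      map_pow (f := phi), g1, hA, g3, g4, pow_eps, ← combine_lemma, map_pow (f := iot),
      map_pow (f := iot), hiot1X]
  rw [← phi_snd, hphiE, snd_coeff_iot]
  rcases Nat.lt_or_ge n 2 with h2 | h2
  · -- n = 1
    have hn1 : n = 1 := by omega
    subst hn1
    have e0 : ((1 - 1 : ℕ) : PowerSeries ℚ) = 0 := by norm_num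
    rw [e0]
    have key : (3 : PowerSeries ℚ) * ((1 + PowerSeries.X) ^ (1 + 1) * A ^ (1 - 1))
          + (1 + PowerSeries.X) ^ (1 + 1) * ((0 : PowerSeries ℚ) * B * A ^ (1 - 1 - 1))
        = 3 + 6 * PowerSeries.X + 3 * (PowerSeries.X * PowerSeries.X) := by
      norm_num; ring
    rw [key, map_add, map_add]
    have c1 : PowerSeries.coeff 1 (3 : PowerSeries ℚ) = 0 := by
      rw [show (3 : PowerSeries ℚ) = PowerSeries.C 3 from (map_ofNat _ 3).symm,
        PowerSeries.coeff_C]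
      norm_num
    have c2 : PowerSeries.coeff 1 (6 * PowerSeries.X : PowerSeries ℚ) = 6 := by
      rw [show (6 : PowerSeries ℚ) = PowerSeries.C 6 from (map_ofNat _ 6).symm,
        PowerSeries.coeff_C_mul, PowerSeries.coeff_X]
      norm_num
    have c3 : PowerSeries.coeff 1 (3 * (PowerSeries.X * PowerSeries.X) : PowerSeries ℚ)
        = 0 := by
      rw [show (3 : PowerSeries ℚ) = PowerSeries.C 3 from (map_ofNat _ 3).symm,
        PowerSeries.coeff_C_mul, PowerSeries.coeff_succ_X_mul]
      simp
    rw [c1, c2, c3]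
    norm_num
  · -- n = l + 2
    obtain ⟨l, rfl⟩ : ∃ l, n = l + 2 := ⟨n - 2, by omega⟩
    have h1 : l + 2 - 1 = l + 1 := rfl
    have h1' : l + 2 - 1 - 1 = l := rfl
    rw [h1', h1]
    set f1 : PowerSeries ℚ := (1 - PowerSeries.X) ^ (l + 1) with hf1
    set f0 : PowerSeries ℚ := (1 - PowerSeries.X) ^ l with hf0
    have T1 : (1 + PowerSeries.X) ^ (l + 2 + 1) * A ^ (l + 1)
        = f1 + 2 * (PowerSeries.X * f1) + PowerSeries.X ^ 2 * f1 := by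
      rw [hAdef, hf1, mul_pow]
      have e : (1 + PowerSeries.X) ^ (l + 2 + 1)
            * ((1 - PowerSeries.X) ^ (l + 1) * J ^ (l + 1))
          = ((1 - PowerSeries.X) ^ (l + 1) + 2 * (PowerSeries.X * (1 - PowerSeries.X) ^ (l + 1))
              + PowerSeries.X ^ 2 * (1 - PowerSeries.X) ^ (l + 1))
            * ((1 + PowerSeries.X) ^ (l + 1) * J ^ (l + 1)) := by ring
      rw [e, ← mul_pow, hJ, one_pow, mul_one]
    have T2 : (1 + PowerSeries.X) ^ (l + 2 + 1) * (((l + 1 : ℕ) : PowerSeries ℚ) * B * A ^ l)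
        = PowerSeries.C ((l + 1 : ℕ) : ℚ)
            * (f1 + PowerSeries.X * f1
               + (2 * f0 + 4 * (PowerSeries.X * f0) + 2 * (PowerSeries.X ^ 2 * f0))) := by
      rw [hAdef, hBdef, hf1, hf0, mul_pow]
      rw [show ((l + 1 : ℕ) : PowerSeries ℚ) = PowerSeries.C ((l + 1 : ℕ) : ℚ) from
        (map_natCast (PowerSeries.C (R := ℚ)) (l + 1)).symm]
      have e : (1 + PowerSeries.X) ^ (l + 2 + 1)
            * (PowerSeries.C ((l + 1 : ℕ) : ℚ)
                * ((1 - PowerSeries.X) * J ^ 2 + 2 * J)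
                * ((1 - PowerSeries.X) ^ l * J ^ l))
          = PowerSeries.C ((l + 1 : ℕ) : ℚ)
              * (((1 - PowerSeries.X) ^ (l + 1) + PowerSeries.X * (1 - PowerSeries.X) ^ (l + 1))
                    * ((1 + PowerSeries.X) ^ (l + 2) * J ^ (l + 2))
                 + (2 * (1 - PowerSeries.X) ^ l + 4 * (PowerSeries.X * (1 - PowerSeries.X) ^ l)
                      + 2 * (PowerSeries.X ^ 2 * (1 - PowerSeries.X) ^ l))
                    * ((1 + PowerSeries.X) ^ (l + 1) * J ^ (l + 1))) := by ring
      rw [e, ← mul_pow, ← mul_pow, hJ]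
      simp only [one_pow, mul_one]
    rw [T1, T2]
    -- coefficient helpers
    have cX : ∀ f : PowerSeries ℚ, PowerSeries.coeff (l + 2) (PowerSeries.X * f)
        = PowerSeries.coeff (l + 1) f := fun f => PowerSeries.coeff_succ_X_mul (l + 1) f
    have cX2 : ∀ f : PowerSeries ℚ, PowerSeries.coeff (l + 2) (PowerSeries.X ^ 2 * f)
        = PowerSeries.coeff l f := fun f => PowerSeries.coeff_X_pow_mul f 2 l
    have v1 : PowerSeries.coeff (l + 2) f1 = 0 := by
      rw [hf1, coeff_one_sub_X_pow, Nat.choose_eq_zero_of_lt (by omega)]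
      norm_num
    have v2 : PowerSeries.coeff (l + 1) f1 = (-1) ^ (l + 1) := by
      rw [hf1, coeff_one_sub_X_pow, Nat.choose_self]
      norm_num
    have v3 : PowerSeries.coeff l f1 = (-1) ^ l * (l + 1) := by
      rw [hf1, coeff_one_sub_X_pow, Nat.choose_succ_self_right]
      push_cast
      ring
    have w1 : PowerSeries.coeff (l + 2) f0 = 0 := by
      rw [hf0, coeff_one_sub_X_pow, Nat.choose_eq_zero_of_lt (by omega)]
      norm_num
    have w2 : PowerSeries.coeff (l + 1) f0 = 0 := by
      rw [hf0, coeff_one_sub_X_pow, Nat.choose_eq_zero_of_lt (by omega)]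
      norm_num
    have w3 : PowerSeries.coeff l f0 = (-1) ^ l := by
      rw [hf0, coeff_one_sub_X_pow, Nat.choose_self]
      norm_num
    have hthree : (3 : PowerSeries ℚ) = PowerSeries.C 3 := (map_ofNat _ 3).symm
    have htwo : (2 : PowerSeries ℚ) = PowerSeries.C 2 := (map_ofNat _ 2).symm
    have hfour : (4 : PowerSeries ℚ) = PowerSeries.C 4 := (map_ofNat _ 4).symm
    simp only [hthree, htwo, hfour, map_add, PowerSeries.coeff_C_mul, cX, cX2,
      v1, v2, v3, w1, w2, w3]
    have hsgn : ((-1 : ℚ)) ^ (l + 2) = (-1) ^ l := by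
      rw [pow_add]
      norm_num
    have hsgn2 : ((-1 : ℚ)) ^ (l + 1) = -(-1) ^ l := by
      rw [pow_add]
      norm_num
    rw [hsgn, hsgn2]
    push_cast
    ring
end

section
/- Let N ≥ 1, ℓ ≥ 0 and consider the polynomial P(g) = ∏_{i=1}^N (g + w_i) − q ∏_{i=1}^N (g + w_i − 1) ∏_{m=1}^ℓ (1 − x_m g), viewed with coefficients in the ring R[[q]] where R = ℚ(w_1,…,w_N, x_1,…,x_ℓ). Then P factors uniquely as P(g) = (g^N + e_{N-1} g^{N-1} + ⋯ + e_0)(f_ℓ g^ℓ + ⋯ + f_1 g + f_0) with e_i, f_m ∈ R[[q]], e_i(q=0) equal to the elementary symmetric functions of w_1,…,w_N (with appropriate signs), f_0(q=0) = 1 and f_m(q=0) = 0 for m > 0; moreover all coefficients of the power series e_i and f_m are polynomials in w_1,…,w_N, x_1,…,x_ℓ (not merely rational functions). -/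
set_option synthInstance.maxHeartbeats 1000000
set_option maxHeartbeats 1000000


noncomputable section

/-- Polynomial ring in the parameters `w_1, …, w_N, x_1, …, x_ℓ` over `ℚ`. -/
abbrev ParamRing (N ℓ : ℕ) := MvPolynomial (Fin N ⊕ Fin ℓ) ℚ

/-- The rational function field `R = ℚ(w_1, …, w_N, x_1, …, x_ℓ)`. -/
abbrev ParamField (N ℓ : ℕ) := FractionRing (ParamRing N ℓ)

def wvar (N ℓ : ℕ) (i : Fin N) : ParamField N ℓ :=
  algebraMap (ParamRing N ℓ) (ParamField N ℓ) (MvPolynomial.X (Sum.inl i))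

def xvar (N ℓ : ℕ) (m : Fin ℓ) : ParamField N ℓ :=
  algebraMap (ParamRing N ℓ) (ParamField N ℓ) (MvPolynomial.X (Sum.inr m))

/-- The polynomial `P(g) = ∏ (g + w_i) − q ∏ (g + w_i − 1) ∏ (1 − x_m g)`, as a polynomial
in `g` with coefficients in `R[[q]]`. -/
def Ppoly (N ℓ : ℕ) : Polynomial (PowerSeries (ParamField N ℓ)) :=
  (∏ i : Fin N, (Polynomial.X + Polynomial.C (PowerSeries.C (wvar N ℓ i))))
  - Polynomial.C PowerSeries.X *
      ((∏ i : Fin N,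
          (Polynomial.X + Polynomial.C (PowerSeries.C (wvar N ℓ i - 1)))) *
        (∏ m : Fin ℓ,
          (1 - Polynomial.C (PowerSeries.C (xvar N ℓ m)) * Polynomial.X)))

/-- The factorization conditions: `P = E·F` with `E` monic of degree `N`, `deg F ≤ ℓ`,
`E(q=0) = ∏ (g + w_i)` (i.e. the `e_i(q=0)` are the signed elementary symmetric functions
of the `w_i`), and `F(q=0) = 1` (i.e. `f_0(0) = 1`, `f_m(0) = 0` for `m > 0`). -/
def FacCond (N ℓ : ℕ)
    (p : Polynomial (PowerSeries (ParamField N ℓ)) ×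
         Polynomial (PowerSeries (ParamField N ℓ))) : Prop :=
  p.1.Monic ∧ p.1.natDegree = N ∧ p.2.natDegree ≤ ℓ ∧
  Ppoly N ℓ = p.1 * p.2 ∧
  p.1.map (PowerSeries.constantCoeff)
      = ∏ i : Fin N, (Polynomial.X + Polynomial.C (wvar N ℓ i)) ∧
  p.2.map (PowerSeries.constantCoeff) = 1

namespace HFP

variable (N ℓ : ℕ)

def φ : ParamRing N ℓ →+* ParamField N ℓ := algebraMap _ _

def P0 : Polynomial (ParamRing N ℓ) :=
  ∏ i : Fin N, (Polynomial.X + Polynomial.C (MvPolynomial.X (Sum.inl i)))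

def P1 : Polynomial (ParamRing N ℓ) :=
  -((∏ i : Fin N, (Polynomial.X + Polynomial.C (MvPolynomial.X (Sum.inl i) - 1))) *
    (∏ m : Fin ℓ, (1 - Polynomial.C (MvPolynomial.X (Sum.inr m)) * Polynomial.X)))

def Pc : ℕ → Polynomial (ParamRing N ℓ)
  | 0 => P0 N ℓ
  | 1 => P1 N ℓ
  | _+2 => 0

lemma monic_P0 : (P0 N ℓ).Monic :=
  Polynomial.monic_prod_of_monic _ _ fun i _ => Polynomial.monic_X_add_C _

lemma natDegree_P0 : (P0 N ℓ).natDegree = N := by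
  rw [P0, Polynomial.natDegree_prod_of_monic _ _ fun i _ => Polynomial.monic_X_add_C _]
  simp [Polynomial.natDegree_X_add_C]

lemma natDegree_P1 : (P1 N ℓ).natDegree ≤ N + ℓ := by
  rw [P1, Polynomial.natDegree_neg]
  refine Polynomial.natDegree_mul_le.trans (add_le_add ?_ ?_)
  · refine (Polynomial.natDegree_prod_le _ _).trans ?_
    refine (Finset.sum_le_card_nsmul _ _ 1 fun i _ => ?_).trans (by simp)
    exact (Polynomial.natDegree_X_add_C _).le
  · refine (Polynomial.natDegree_prod_le _ _).trans ?_
    refine (Finset.sum_le_card_nsmul _ _ 1 fun i _ => ?_).trans (by simp)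
    refine (Polynomial.natDegree_sub_le _ _).trans (max_le (by simp) ?_)
    exact (Polynomial.natDegree_C_mul_le _ _).trans (by simp)

lemma natDegree_Pc (n : ℕ) : (Pc N ℓ n).natDegree ≤ N + ℓ := by
  match n with
  | 0 => simpa [Pc, natDegree_P0] using Nat.le_add_right N ℓ
  | 1 => exact natDegree_P1 N ℓ
  | (n+2) => simp [Pc]

def EF : ℕ → Polynomial (ParamRing N ℓ) × Polynomial (ParamRing N ℓ)
  | 0 => (P0 N ℓ, 1)
  | (n+1) =>
      let Cn := Pc N ℓ (n+1) - ∑ i ∈ (Finset.range n).attach,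
        (EF (i.1+1)).1 * (EF (n - i.1)).2
      (Cn %ₘ P0 N ℓ, Cn /ₘ P0 N ℓ)
  termination_by n => n
  decreasing_by
  · exact Nat.succ_lt_succ (Finset.mem_range.mp i.2)
  · exact Nat.lt_succ_of_le (Nat.sub_le _ _)

lemma EF_zero : EF N ℓ 0 = (P0 N ℓ, 1) := by rw [EF]

lemma EF_succ (n : ℕ) : EF N ℓ (n+1) =
    ((Pc N ℓ (n+1) - ∑ i ∈ (Finset.range n).attach,
        (EF N ℓ (i.1+1)).1 * (EF N ℓ (n - i.1)).2) %ₘ P0 N ℓ,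
     (Pc N ℓ (n+1) - ∑ i ∈ (Finset.range n).attach,
        (EF N ℓ (i.1+1)).1 * (EF N ℓ (n - i.1)).2) /ₘ P0 N ℓ) := by
  rw [EF]

lemma degree_P0 : (P0 N ℓ).degree = (N : WithBot ℕ) := by
  rw [Polynomial.degree_eq_natDegree (monic_P0 N ℓ).ne_zero, natDegree_P0]

lemma degree_EF1_succ (n : ℕ) : (EF N ℓ (n+1)).1.degree < (N : WithBot ℕ) := by
  rw [EF_succ]
  exact (degree_P0 N ℓ) ▸ Polynomial.degree_modByMonic_lt _ (monic_P0 N ℓ)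

lemma coeff_EF1_eq_zero {n j : ℕ} (hj : N < j) : (EF N ℓ n).1.coeff j = 0 := by
  cases n with
  | zero =>
      rw [EF_zero]
      exact Polynomial.coeff_eq_zero_of_natDegree_lt (by rw [natDegree_P0]; exact hj)
  | succ n =>
      refine Polynomial.coeff_eq_zero_of_degree_lt ((degree_EF1_succ N ℓ n).trans ?_)
      exact_mod_cast WithBot.coe_lt_coe.mpr hj

lemma natDegree_EF1 (n : ℕ) : (EF N ℓ n).1.natDegree ≤ N := by
  cases n with
  | zero => rw [EF_zero]; exact (natDegree_P0 N ℓ).le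
  | succ n =>
      by_cases h : (EF N ℓ (n+1)).1 = 0
      · simp [h]
      · have := degree_EF1_succ N ℓ n
        rw [Polynomial.degree_eq_natDegree h] at this
        exact_mod_cast (Nat.cast_lt.mp this).le

lemma natDegree_EF2 (n : ℕ) : (EF N ℓ n).2.natDegree ≤ ℓ := by
  induction n using Nat.strong_induction_on with
  | _ n ih =>
    cases n with
    | zero => rw [EF_zero]; simp
    | succ n =>
      rw [EF_succ]
      rw [Polynomial.natDegree_divByMonic _ (monic_P0 N ℓ), natDegree_P0]
      have hC : (Pc N ℓ (n+1) - ∑ i ∈ (Finset.range n).attach,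
          (EF N ℓ (i.1+1)).1 * (EF N ℓ (n - i.1)).2).natDegree ≤ N + ℓ := by
        refine (Polynomial.natDegree_sub_le _ _).trans (max_le (natDegree_Pc N ℓ _) ?_)
        refine Polynomial.natDegree_sum_le_of_forall_le _ _ fun i _ => ?_
        refine Polynomial.natDegree_mul_le.trans
          (add_le_add (natDegree_EF1 N ℓ _) (ih (n - i.1) ?_))
        exact Nat.lt_succ_of_le (Nat.sub_le _ _)
      omega

lemma EF_conv (n : ℕ) :
    ∑ k ∈ Finset.HasAntidiagonal.antidiagonal n, (EF N ℓ k.1).1 * (EF N ℓ k.2).2 = Pc N ℓ n := by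
  cases n with
  | zero => simp [EF_zero, Pc]
  | succ n =>
    rw [Finset.Nat.sum_antidiagonal_eq_sum_range_succ_mk]
    simp only
    rw [Finset.sum_range_succ', Finset.sum_range_succ]
    simp only [Nat.succ_sub_succ, Nat.sub_zero, Nat.sub_self]
    have hattach : ∑ i ∈ (Finset.range n).attach,
        (EF N ℓ (i.1+1)).1 * (EF N ℓ (n - i.1)).2
        = ∑ i ∈ Finset.range n, (EF N ℓ (i+1)).1 * (EF N ℓ (n - i)).2 :=
      Finset.sum_attach (Finset.range n) (fun i => (EF N ℓ (i+1)).1 * (EF N ℓ (n - i)).2)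
    have hmod : (EF N ℓ (n+1)).1 + P0 N ℓ * (EF N ℓ (n+1)).2
        = Pc N ℓ (n+1) - ∑ i ∈ Finset.range n, (EF N ℓ (i+1)).1 * (EF N ℓ (n - i)).2 := by
      rw [EF_succ]
      dsimp only
      rw [Polynomial.modByMonic_add_div _ (P0 N ℓ), hattach]
    rw [EF_zero]
    simp only
    linear_combination hmod

def Eser (j : ℕ) : PowerSeries (ParamField N ℓ) :=
  PowerSeries.mk fun n => φ N ℓ ((EF N ℓ n).1.coeff j)
def Fser (j : ℕ) : PowerSeries (ParamField N ℓ) :=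
  PowerSeries.mk fun n => φ N ℓ ((EF N ℓ n).2.coeff j)

def Epoly : Polynomial (PowerSeries (ParamField N ℓ)) :=
  ∑ j ∈ Finset.range (N+1), Polynomial.monomial j (Eser N ℓ j)
def Fpoly : Polynomial (PowerSeries (ParamField N ℓ)) :=
  ∑ j ∈ Finset.range (ℓ+1), Polynomial.monomial j (Fser N ℓ j)

lemma coeff_Epoly (j : ℕ) : (Epoly N ℓ).coeff j = Eser N ℓ j := by
  rw [Epoly, Polynomial.finset_sum_coeff]
  by_cases hj : j < N + 1
  · rw [Finset.sum_eq_single j (fun b _ hb => by rw [Polynomial.coeff_monomial, if_neg hb])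
      (fun h => absurd (Finset.mem_range.mpr hj) h), Polynomial.coeff_monomial, if_pos rfl]
  · rw [Finset.sum_eq_zero fun b hb => by
      rw [Polynomial.coeff_monomial, if_neg]; exact fun h => hj (h ▸ Finset.mem_range.mp hb)]
    ext n
    simp only [Eser, PowerSeries.coeff_mk, map_zero, PowerSeries.coeff_zero_eq_constantCoeff]
    rw [coeff_EF1_eq_zero N ℓ (by omega), map_zero]
lemma coeff_Fpoly (j : ℕ) : (Fpoly N ℓ).coeff j = Fser N ℓ j := by
  rw [Fpoly, Polynomial.finset_sum_coeff]
  by_cases hj : j < ℓ + 1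
  · rw [Finset.sum_eq_single j (fun b _ hb => by rw [Polynomial.coeff_monomial, if_neg hb])
      (fun h => absurd (Finset.mem_range.mpr hj) h), Polynomial.coeff_monomial, if_pos rfl]
  · rw [Finset.sum_eq_zero fun b hb => by
      rw [Polynomial.coeff_monomial, if_neg]; exact fun h => hj (h ▸ Finset.mem_range.mp hb)]
    ext n
    simp only [Fser, PowerSeries.coeff_mk, map_zero, PowerSeries.coeff_zero_eq_constantCoeff]
    rw [Polynomial.coeff_eq_zero_of_natDegree_lt (lt_of_le_of_lt (natDegree_EF2 N ℓ n) (by omega)),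
      map_zero]

def Θ : Polynomial (PowerSeries (ParamField N ℓ)) →+* PowerSeries (Polynomial (ParamField N ℓ)) :=
  Polynomial.eval₂RingHom
    (PowerSeries.map (Polynomial.C : ParamField N ℓ →+* Polynomial (ParamField N ℓ)))
    (PowerSeries.C Polynomial.X)

lemma coeff_Θ (p : Polynomial (PowerSeries (ParamField N ℓ))) (n j : ℕ) :
    (PowerSeries.coeff n (Θ N ℓ p)).coeff j = PowerSeries.coeff n (p.coeff j) := by
  induction p using Polynomial.induction_on' with
  | add p q hp hq => simp [map_add, hp, hq]
  | monomial k a =>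
    rw [Θ, Polynomial.coe_eval₂RingHom, Polynomial.eval₂_monomial, ← map_pow,
      PowerSeries.coeff_mul_C, PowerSeries.coeff_map, Polynomial.coeff_C_mul,
      Polynomial.coeff_X_pow, Polynomial.coeff_monomial]
    by_cases h : j = k
    · simp [h]
    · simp [h, Ne.symm h]

lemma Θ_injective : Function.Injective (Θ N ℓ) := by
  intro p q h
  ext j n
  have := coeff_Θ N ℓ p n j
  rw [h, coeff_Θ] at this
  exact this.symm

lemma coeff_Θ_Epoly (n : ℕ) :
    PowerSeries.coeff n (Θ N ℓ (Epoly N ℓ)) = ((EF N ℓ n).1).map (φ N ℓ) := by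
  ext j
  rw [coeff_Θ, coeff_Epoly, Polynomial.coeff_map]
  simp [Eser]

lemma coeff_Θ_Fpoly (n : ℕ) :
    PowerSeries.coeff n (Θ N ℓ (Fpoly N ℓ)) = ((EF N ℓ n).2).map (φ N ℓ) := by
  ext j
  rw [coeff_Θ, coeff_Fpoly, Polynomial.coeff_map]
  simp [Fser]

def Cφ : ParamRing N ℓ →+* PowerSeries (ParamField N ℓ) :=
  (PowerSeries.C).comp (φ N ℓ)

lemma Ppoly_eq :
    Ppoly N ℓ = Polynomial.mapRingHom (Cφ N ℓ) (P0 N ℓ)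
      + Polynomial.C PowerSeries.X * Polynomial.mapRingHom (Cφ N ℓ) (P1 N ℓ) := by
  rw [Ppoly, P1, map_neg, map_mul, map_prod, map_prod]
  have h0 : Polynomial.mapRingHom (Cφ N ℓ) (P0 N ℓ)
      = ∏ i : Fin N, (Polynomial.X + Polynomial.C (PowerSeries.C (wvar N ℓ i))) := by
    rw [P0, map_prod]
    refine Finset.prod_congr rfl fun i _ => ?_
    simp [Polynomial.coe_mapRingHom, Cφ, wvar, φ]
  have h1 : ∀ i : Fin N, Polynomial.mapRingHom (Cφ N ℓ)
        (Polynomial.X + Polynomial.C (MvPolynomial.X (Sum.inl i) - 1))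
      = Polynomial.X + Polynomial.C (PowerSeries.C (wvar N ℓ i - 1)) := by
    intro i
    simp [Polynomial.coe_mapRingHom, Cφ, wvar, φ, map_sub]
  have h2 : ∀ m : Fin ℓ, Polynomial.mapRingHom (Cφ N ℓ)
        (1 - Polynomial.C (MvPolynomial.X (Sum.inr m)) * Polynomial.X)
      = 1 - Polynomial.C (PowerSeries.C (xvar N ℓ m)) * Polynomial.X := by
    intro m
    simp [Polynomial.coe_mapRingHom, Cφ, xvar, φ]
  rw [h0, Finset.prod_congr rfl fun i _ => h1 i, Finset.prod_congr rfl fun m _ => h2 m]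
  ring

lemma coeff_Ppoly (n j : ℕ) :
    PowerSeries.coeff n ((Ppoly N ℓ).coeff j) = φ N ℓ ((Pc N ℓ n).coeff j) := by
  rw [Ppoly_eq, Polynomial.coeff_add, Polynomial.coeff_C_mul]
  show PowerSeries.coeff n ((Polynomial.map (Cφ N ℓ) (P0 N ℓ)).coeff j
      + PowerSeries.X * (Polynomial.map (Cφ N ℓ) (P1 N ℓ)).coeff j) = _
  rw [Polynomial.coeff_map, Polynomial.coeff_map, map_add]
  show PowerSeries.coeff n (PowerSeries.C (φ N ℓ ((P0 N ℓ).coeff j)))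
      + PowerSeries.coeff n (PowerSeries.X * PowerSeries.C (φ N ℓ ((P1 N ℓ).coeff j))) = _
  match n with
  | 0 => simp [Pc]
  | 1 => simp [PowerSeries.coeff_succ_X_mul, PowerSeries.coeff_C, Pc]
  | (n+2) =>
    rw [PowerSeries.coeff_succ_X_mul]
    simp [PowerSeries.coeff_C, Pc]

lemma coeff_Θ_Ppoly (n : ℕ) :
    PowerSeries.coeff n (Θ N ℓ (Ppoly N ℓ)) = (Pc N ℓ n).map (φ N ℓ) := by
  ext j
  rw [coeff_Θ, coeff_Ppoly, Polynomial.coeff_map]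

lemma Ppoly_factor : Ppoly N ℓ = Epoly N ℓ * Fpoly N ℓ := by
  apply Θ_injective
  rw [map_mul]
  refine PowerSeries.ext fun n => ?_
  rw [PowerSeries.coeff_mul, coeff_Θ_Ppoly, ← EF_conv, Polynomial.map_sum]
  exact Finset.sum_congr rfl fun k _ => by
    rw [Polynomial.map_mul, coeff_Θ_Epoly, coeff_Θ_Fpoly]

lemma Eser_N : Eser N ℓ N = 1 := by
  ext n
  rw [Eser, PowerSeries.coeff_mk, PowerSeries.coeff_one]
  cases n with
  | zero =>
    rw [if_pos rfl, EF_zero]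
    have : (P0 N ℓ).coeff N = 1 := by
      have := (monic_P0 N ℓ).coeff_natDegree
      rwa [natDegree_P0] at this
    rw [this, map_one]
  | succ n =>
    rw [if_neg (Nat.succ_ne_zero n)]
    rw [Polynomial.coeff_eq_zero_of_degree_lt ((degree_EF1_succ N ℓ n).trans_le le_rfl), map_zero]

lemma natDegree_Epoly_le : (Epoly N ℓ).natDegree ≤ N :=
  Polynomial.natDegree_sum_le_of_forall_le _ _ fun j hj =>
    (Polynomial.natDegree_monomial_le _).trans (Nat.lt_succ_iff.mp (Finset.mem_range.mp hj))

lemma natDegree_Fpoly_le : (Fpoly N ℓ).natDegree ≤ ℓ :=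
  Polynomial.natDegree_sum_le_of_forall_le _ _ fun j hj =>
    (Polynomial.natDegree_monomial_le _).trans (Nat.lt_succ_iff.mp (Finset.mem_range.mp hj))

lemma monic_Epoly : (Epoly N ℓ).Monic :=
  Polynomial.monic_of_natDegree_le_of_coeff_eq_one N (natDegree_Epoly_le N ℓ)
    (by rw [coeff_Epoly, Eser_N])

lemma natDegree_Epoly : (Epoly N ℓ).natDegree = N :=
  le_antisymm (natDegree_Epoly_le N ℓ)
    (Polynomial.le_natDegree_of_ne_zero (by rw [coeff_Epoly, Eser_N]; exact one_ne_zero))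

lemma P0_map : (P0 N ℓ).map (φ N ℓ)
    = ∏ i : Fin N, (Polynomial.X + Polynomial.C (wvar N ℓ i)) := by
  rw [P0, Polynomial.map_prod]
  exact Finset.prod_congr rfl fun i _ => by simp [wvar, φ]

lemma Epoly_map : (Epoly N ℓ).map (PowerSeries.constantCoeff)
    = ∏ i : Fin N, (Polynomial.X + Polynomial.C (wvar N ℓ i)) := by
  rw [← P0_map]
  ext j
  rw [Polynomial.coeff_map, coeff_Epoly, Polynomial.coeff_map]
  rw [Eser, ← PowerSeries.coeff_zero_eq_constantCoeff_apply, PowerSeries.coeff_mk, EF_zero]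

lemma Fpoly_map : (Fpoly N ℓ).map (PowerSeries.constantCoeff) = 1 := by
  ext j
  rw [Polynomial.coeff_map, coeff_Fpoly,
    Fser, ← PowerSeries.coeff_zero_eq_constantCoeff_apply, PowerSeries.coeff_mk, EF_zero]
  simp only
  rw [Polynomial.coeff_one, Polynomial.coeff_one]
  split <;> simp

lemma facCond_EF : FacCond N ℓ (Epoly N ℓ, Fpoly N ℓ) :=
  ⟨monic_Epoly N ℓ, natDegree_Epoly N ℓ, natDegree_Fpoly_le N ℓ, Ppoly_factor N ℓ,
    Epoly_map N ℓ, Fpoly_map N ℓ⟩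

lemma coeff_zero_Θ (q : Polynomial (PowerSeries (ParamField N ℓ))) :
    PowerSeries.coeff 0 (Θ N ℓ q) = q.map (PowerSeries.constantCoeff) := by
  ext j
  rw [coeff_Θ, Polynomial.coeff_map, PowerSeries.coeff_zero_eq_constantCoeff]

lemma uniq (p' : Polynomial (PowerSeries (ParamField N ℓ)) ×
    Polynomial (PowerSeries (ParamField N ℓ))) (h : FacCond N ℓ p') :
    p' = (Epoly N ℓ, Fpoly N ℓ) := by
  obtain ⟨hmonic, hdE, hdF, hfac, hE0, hF0⟩ := h
  set D := Θ N ℓ p'.1 - Θ N ℓ (Epoly N ℓ) with hD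
  set G := Θ N ℓ p'.2 - Θ N ℓ (Fpoly N ℓ) with hG
  have hprod : Θ N ℓ p'.1 * Θ N ℓ p'.2 = Θ N ℓ (Epoly N ℓ) * Θ N ℓ (Fpoly N ℓ) := by
    rw [← map_mul, ← map_mul, ← hfac, ← Ppoly_factor]
  have hDG : D * Θ N ℓ p'.2 + Θ N ℓ (Epoly N ℓ) * G = 0 := by
    rw [hD, hG]; linear_combination hprod
  have hcoeff0F : PowerSeries.coeff 0 (Θ N ℓ p'.2) = 1 := by
    rw [coeff_zero_Θ, hF0]
  have hcoeff0E : PowerSeries.coeff 0 (Θ N ℓ (Epoly N ℓ)) = (P0 N ℓ).map (φ N ℓ) := by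
    rw [coeff_zero_Θ, Epoly_map, P0_map]
  have hP0K : ((P0 N ℓ).map (φ N ℓ)).Monic := (monic_P0 N ℓ).map _
  have hP0Kdeg : ((P0 N ℓ).map (φ N ℓ)).natDegree = N := by
    rw [(monic_P0 N ℓ).natDegree_map, natDegree_P0]
  have key : ∀ n : ℕ, PowerSeries.coeff n D = 0 ∧ PowerSeries.coeff n G = 0 := by
    intro n
    induction n using Nat.strong_induction_on with
    | _ n ih =>
      have h1 : PowerSeries.coeff n (D * Θ N ℓ p'.2) = PowerSeries.coeff n D := by
        rw [PowerSeries.coeff_mul,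
          Finset.sum_eq_single (n, 0) (fun b hb hne => ?_) (fun habs => ?_)]
        · rw [hcoeff0F, mul_one]
        · rcases Nat.lt_or_ge b.1 n with hb1 | hb1
          · rw [(ih b.1 hb1).1, zero_mul]
          · exfalso; apply hne
            have := Finset.HasAntidiagonal.mem_antidiagonal.mp hb
            have : b.1 = n ∧ b.2 = 0 := by omega
            exact Prod.ext this.1 this.2
        · exact absurd (Finset.HasAntidiagonal.mem_antidiagonal.mpr (by simp)) habs
      have h2 : PowerSeries.coeff n (Θ N ℓ (Epoly N ℓ) * G)
          = ((P0 N ℓ).map (φ N ℓ)) * PowerSeries.coeff n G := by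
        rw [PowerSeries.coeff_mul,
          Finset.sum_eq_single (0, n) (fun b hb hne => ?_) (fun habs => ?_)]
        · rw [hcoeff0E]
        · rcases Nat.lt_or_ge b.2 n with hb2 | hb2
          · rw [(ih b.2 hb2).2, mul_zero]
          · exfalso; apply hne
            have := Finset.HasAntidiagonal.mem_antidiagonal.mp hb
            have : b.1 = 0 ∧ b.2 = n := by omega
            exact Prod.ext this.1 this.2
        · exact absurd (Finset.HasAntidiagonal.mem_antidiagonal.mpr (by simp)) habs
      have heq : PowerSeries.coeff n D + ((P0 N ℓ).map (φ N ℓ)) * PowerSeries.coeff n G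
          = 0 := by
        rw [← h1, ← h2, ← map_add, hDG, map_zero]
      have hdegD : (PowerSeries.coeff n D).degree < (N : ℕ) := by
        rw [Polynomial.degree_lt_iff_coeff_zero]
        intro m hm
        rw [hD, map_sub, Polynomial.coeff_sub, coeff_Θ, coeff_Θ]
        have hc : ∀ (q : Polynomial (PowerSeries (ParamField N ℓ))), q.Monic →
            q.natDegree = N → q.coeff m = if m = N then 1 else 0 := by
          intro q hq hqd
          rcases eq_or_lt_of_le hm with hmN | hmN
          · subst hmN
            rw [if_pos rfl]
            have := hq.coeff_natDegree
            rwa [hqd] at this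
          · rw [if_neg (by omega), Polynomial.coeff_eq_zero_of_natDegree_lt (by omega)]
        rw [hc _ hmonic hdE, hc _ (monic_Epoly N ℓ) (natDegree_Epoly N ℓ), sub_self]
      have hGn : PowerSeries.coeff n G = 0 := by
        by_contra hne
        have hd : (((P0 N ℓ).map (φ N ℓ)) * PowerSeries.coeff n G).degree
            = ((P0 N ℓ).map (φ N ℓ)).degree + (PowerSeries.coeff n G).degree :=
          Polynomial.degree_mul
        have hge : (N : WithBot ℕ) ≤ (((P0 N ℓ).map (φ N ℓ)) * PowerSeries.coeff n G).degree := by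
          rw [hd, Polynomial.degree_eq_natDegree hP0K.ne_zero, hP0Kdeg]
          rw [Polynomial.degree_eq_natDegree hne]
          exact_mod_cast le_add_of_nonneg_right (by positivity)
        have : PowerSeries.coeff n D = -(((P0 N ℓ).map (φ N ℓ)) * PowerSeries.coeff n G) := by
          linear_combination heq
        rw [this, Polynomial.degree_neg] at hdegD
        exact absurd (hge.trans_lt hdegD) (lt_irrefl _)
      refine ⟨?_, hGn⟩
      have := heq
      rw [hGn, mul_zero, add_zero] at this
      exact this
  have hD0 : Θ N ℓ p'.1 = Θ N ℓ (Epoly N ℓ) := by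
    have : D = 0 := PowerSeries.ext fun n => by rw [(key n).1, map_zero]
    rw [hD, sub_eq_zero] at this
    exact this
  have hG0 : Θ N ℓ p'.2 = Θ N ℓ (Fpoly N ℓ) := by
    have : G = 0 := PowerSeries.ext fun n => by rw [(key n).2, map_zero]
    rw [hG, sub_eq_zero] at this
    exact this
  exact Prod.ext (Θ_injective N ℓ hD0) (Θ_injective N ℓ hG0)

end HFP

/-- `P` factors uniquely as above, and moreover every coefficient of each
of the power series `e_i`, `f_m` is a polynomial in the `w_i` and `x_m` (not merely a
rational function). -/
theorem hensel_factorization_polynomiality (N ℓ : ℕ) (hN : 1 ≤ N) :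
    ∃ p, FacCond N ℓ p ∧ (∀ p', FacCond N ℓ p' → p' = p) ∧
      (∀ j k : ℕ,
        PowerSeries.coeff k (p.1.coeff j)
            ∈ (algebraMap (ParamRing N ℓ) (ParamField N ℓ)).range
        ∧ PowerSeries.coeff k (p.2.coeff j)
            ∈ (algebraMap (ParamRing N ℓ) (ParamField N ℓ)).range) := by
  refine ⟨(HFP.Epoly N ℓ, HFP.Fpoly N ℓ), HFP.facCond_EF N ℓ, HFP.uniq N ℓ, ?_⟩
  intro j k
  constructor
  · refine ⟨(HFP.EF N ℓ k).1.coeff j, ?_⟩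
    rw [HFP.coeff_Epoly, HFP.Eser, PowerSeries.coeff_mk]
    rfl
  · refine ⟨(HFP.EF N ℓ k).2.coeff j, ?_⟩
    rw [HFP.coeff_Fpoly, HFP.Fser, PowerSeries.coeff_mk]
    rfl

end
end

section
/- With t ∈ ℚ[[q]] determined by q = −t/(1−t), every iterated partial derivative ∂^{k_1}_{x_1} ⋯ ∂^{k_ℓ}_{x_ℓ} W |_{x_1=⋯=x_ℓ=0} of the series W from the Lagrange substitution W = ∏ (1 − x_i t)^{−a_i} (1−t)^{−b} (1+t)^{−c} (with t solving −q = t/((1−t)∏(1−x_m t)), t(0)=0) is a rational function of q. In particular ∂W/∂x_1|_{x=0} is rational, using ∂q/∂x_1|_{x=0} = −t^2/(1−t). -/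
/-- Specialization setting all variables except the `i0`-th (the `q`-variable) to zero. -/
noncomputable def specAt {n : ℕ} (i0 : Fin n) (F : MvPowerSeries (Fin n) ℚ) :
    PowerSeries ℚ :=
  PowerSeries.mk fun k => MvPowerSeries.coeff (Finsupp.single i0 k) F

/-- Formal partial derivative of a multivariate power series with respect to variable `i`. -/
noncomputable def pderivAt {n : ℕ} (i : Fin n) (F : MvPowerSeries (Fin n) ℚ) :
    MvPowerSeries (Fin n) ℚ :=
  fun e => ((e i + 1 : ℕ) : ℚ) * MvPowerSeries.coeff (e + Finsupp.single i 1) F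

/-- A power series in `q` is the expansion of a rational function. -/
def RationalPS (F : PowerSeries ℚ) : Prop :=
  ∃ a b : Polynomial ℚ, b ≠ 0 ∧ F * (b : PowerSeries ℚ) = (a : PowerSeries ℚ)


open Finsupp MvPowerSeries

variable {ℓ : ℕ}

/-- Extract the coefficient of `x^m` as a power series in `q` (variable `0`). -/
noncomputable def Tc (m : Fin ℓ →₀ ℕ) (F : MvPowerSeries (Fin (ℓ + 1)) ℚ) : PowerSeries ℚ :=
  PowerSeries.mk fun k => MvPowerSeries.coeff (Finsupp.cons k m) F

lemma Tc_coeff (m : Fin ℓ →₀ ℕ) (F : MvPowerSeries (Fin (ℓ + 1)) ℚ) (k : ℕ) :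
    PowerSeries.coeff k (Tc m F) = MvPowerSeries.coeff (Finsupp.cons k m) F :=
  PowerSeries.coeff_mk _ _

lemma cons_add (a b : ℕ) (s u : Fin ℓ →₀ ℕ) :
    Finsupp.cons a s + Finsupp.cons b u = Finsupp.cons (a + b) (s + u) := by
  ext i
  refine Fin.cases ?_ (fun j => ?_) i <;> simp

lemma Tc_add (m : Fin ℓ →₀ ℕ) (F G : MvPowerSeries (Fin (ℓ + 1)) ℚ) :
    Tc m (F + G) = Tc m F + Tc m G := by
  ext k; simp [Tc_coeff, map_add]

lemma Tc_neg (m : Fin ℓ →₀ ℕ) (F : MvPowerSeries (Fin (ℓ + 1)) ℚ) :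
    Tc m (-F) = - Tc m F := by
  ext k; simp [Tc_coeff]

lemma Tc_sub (m : Fin ℓ →₀ ℕ) (F G : MvPowerSeries (Fin (ℓ + 1)) ℚ) :
    Tc m (F - G) = Tc m F - Tc m G := by
  ext k; simp [Tc_coeff]

lemma Tc_one (m : Fin ℓ →₀ ℕ) :
    Tc m (1 : MvPowerSeries (Fin (ℓ + 1)) ℚ) = if m = 0 then 1 else 0 := by
  ext k
  rw [Tc_coeff, MvPowerSeries.coeff_one]
  by_cases hm : m = 0
  · subst hm
    by_cases hk : k = 0
    · subst hk; simp
    · rw [if_neg, if_pos rfl, PowerSeries.coeff_one, if_neg hk]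
      intro h
      apply hk
      have := congrArg (fun f => f (0 : Fin (ℓ+1))) h
      simpa using this
  · rw [if_neg, if_neg hm]
    · simp
    · intro h
      apply hm
      have : Finsupp.tail (Finsupp.cons k m) = Finsupp.tail (0 : Fin (ℓ+1) →₀ ℕ) := by rw [h]
      rw [Finsupp.tail_cons] at this
      rw [this]
      ext i
      simp [Finsupp.tail_apply]

lemma Tc_mul (m : Fin ℓ →₀ ℕ) (F G : MvPowerSeries (Fin (ℓ + 1)) ℚ) :
    Tc m (F * G) = ∑ p ∈ Finset.HasAntidiagonal.antidiagonal m, Tc p.1 F * Tc p.2 G := by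
  ext k
  rw [Tc_coeff, MvPowerSeries.coeff_mul, map_sum]
  have : ∀ p ∈ Finset.HasAntidiagonal.antidiagonal m,
      PowerSeries.coeff k (Tc p.1 F * Tc p.2 G)
      = ∑ r ∈ Finset.HasAntidiagonal.antidiagonal k,
          MvPowerSeries.coeff (Finsupp.cons r.1 p.1) F *
          MvPowerSeries.coeff (Finsupp.cons r.2 p.2) G := by
    intro p _
    rw [PowerSeries.coeff_mul]
    exact Finset.sum_congr rfl fun r _ => by rw [Tc_coeff, Tc_coeff]
  rw [Finset.sum_congr rfl this, ← Finset.sum_product']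
  refine Finset.sum_nbij' (i := fun ef => ((Finsupp.tail ef.1, Finsupp.tail ef.2), (ef.1 0, ef.2 0)))
    (j := fun pr => (Finsupp.cons pr.2.1 pr.1.1, Finsupp.cons pr.2.2 pr.1.2)) ?_ ?_ ?_ ?_ ?_
  · intro ef hef
    rw [Finset.HasAntidiagonal.mem_antidiagonal] at hef
    simp only [Finset.mem_product, Finset.HasAntidiagonal.mem_antidiagonal, Finset.HasAntidiagonal.mem_antidiagonal]
    constructor
    · ext i
      have := congrArg (fun f => f i.succ) hef
      simpa [Finsupp.tail_apply] using this
    · have := congrArg (fun f => f (0 : Fin (ℓ+1))) hef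
      simpa using this
  · intro pr hpr
    simp only [Finset.mem_product, Finset.HasAntidiagonal.mem_antidiagonal, Finset.HasAntidiagonal.mem_antidiagonal] at hpr
    rw [Finset.HasAntidiagonal.mem_antidiagonal, cons_add, hpr.1, hpr.2]
  · intro ef _
    simp [Finsupp.cons_tail]
  · intro pr _
    simp [Finsupp.tail_cons, Finsupp.cons_zero]
  · intro ef _
    simp [Finsupp.cons_tail]


namespace RatlPS

lemma zero : RationalPS 0 := ⟨0, 1, one_ne_zero, by simp⟩

lemma one : RationalPS 1 := ⟨1, 1, one_ne_zero, by simp⟩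

lemma add {F G : PowerSeries ℚ} (hF : RationalPS F) (hG : RationalPS G) :
    RationalPS (F + G) := by
  obtain ⟨a1, b1, hb1, h1⟩ := hF
  obtain ⟨a2, b2, hb2, h2⟩ := hG
  refine ⟨a1 * b2 + a2 * b1, b1 * b2, mul_ne_zero hb1 hb2, ?_⟩
  push_cast
  linear_combination (b2 : PowerSeries ℚ) * h1 + (b1 : PowerSeries ℚ) * h2

lemma neg {F : PowerSeries ℚ} (hF : RationalPS F) : RationalPS (-F) := by
  obtain ⟨a, b, hb, h⟩ := hF
  exact ⟨-a, b, hb, by push_cast; linear_combination -h⟩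

lemma mul {F G : PowerSeries ℚ} (hF : RationalPS F) (hG : RationalPS G) :
    RationalPS (F * G) := by
  obtain ⟨a1, b1, hb1, h1⟩ := hF
  obtain ⟨a2, b2, hb2, h2⟩ := hG
  refine ⟨a1 * a2, b1 * b2, mul_ne_zero hb1 hb2, ?_⟩
  rw [Polynomial.coe_mul, Polynomial.coe_mul]
  calc F * G * ((b1 : PowerSeries ℚ) * (b2 : PowerSeries ℚ))
      = (F * b1) * (G * b2) := by ring
    _ = (a1 : PowerSeries ℚ) * (a2 : PowerSeries ℚ) := by rw [h1, h2]

lemma sub {F G : PowerSeries ℚ} (hF : RationalPS F) (hG : RationalPS G) :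
    RationalPS (F - G) := by
  rw [sub_eq_add_neg]; exact add hF (neg hG)

lemma X : RationalPS PowerSeries.X :=
  ⟨Polynomial.X, 1, one_ne_zero, by rw [Polynomial.coe_one, Polynomial.coe_X, mul_one]⟩

lemma smul (c : ℚ) {F : PowerSeries ℚ} (hF : RationalPS F) : RationalPS (c • F) := by
  obtain ⟨a, b, hb, h⟩ := hF
  refine ⟨Polynomial.C c * a, b, hb, ?_⟩
  rw [smul_mul_assoc, h, Polynomial.coe_mul, Polynomial.coe_C]
  rw [PowerSeries.smul_eq_C_mul]

lemma sum {s : Finset α} {f : α → PowerSeries ℚ} (h : ∀ i ∈ s, RationalPS (f i)) :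
    RationalPS (∑ i ∈ s, f i) := by
  classical
  induction s using Finset.cons_induction with
  | empty => simpa using zero
  | cons i s hi ih =>
      rw [Finset.sum_cons]
      exact add (h i (Finset.mem_cons_self i s)) (ih fun j hj => h j (Finset.mem_cons.2 (Or.inr hj)))

/-- Cancel a nonzero polynomial factor. -/
lemma cancel_poly {F G : PowerSeries ℚ} {p : Polynomial ℚ} (hp : p ≠ 0)
    (h : F * (p : PowerSeries ℚ) = G) (hG : RationalPS G) : RationalPS F := by
  obtain ⟨a, b, hb, hG'⟩ := hG
  refine ⟨a, p * b, mul_ne_zero hp hb, ?_⟩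
  rw [Polynomial.coe_mul, ← mul_assoc, h, hG']

/-- Cancel a nonzero rational factor. -/
lemma cancel {F G : PowerSeries ℚ} (hFG : RationalPS (F * G)) (hG : RationalPS G)
    (hG0 : G ≠ 0) : RationalPS F := by
  obtain ⟨a2, b2, hb2, h2⟩ := hFG
  obtain ⟨a1, b1, hb1, h1⟩ := hG
  have ha1 : a1 ≠ 0 := by
    intro h0
    apply hG0
    have : G * (b1 : PowerSeries ℚ) = 0 := by rw [h1, h0, Polynomial.coe_zero]
    rcases mul_eq_zero.1 this with h | h
    · exact h
    · exact absurd (Polynomial.coe_eq_zero_iff.1 h) hb1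
  refine ⟨a2 * b1, b2 * a1, mul_ne_zero hb2 ha1, ?_⟩
  rw [Polynomial.coe_mul, Polynomial.coe_mul, ← h1, ← h2]
  ring

end RatlPS

open Finsupp MvPowerSeries

lemma Tc_X0_mul (m : Fin ℓ →₀ ℕ) (F : MvPowerSeries (Fin (ℓ + 1)) ℚ) :
    Tc m (MvPowerSeries.X 0 * F) = PowerSeries.X * Tc m F := by
  ext k
  rw [Tc_coeff]
  show MvPowerSeries.coeff _ (MvPowerSeries.monomial (Finsupp.single 0 1) 1 * F) = _
  rw [MvPowerSeries.coeff_monomial_mul]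
  cases k with
  | zero =>
      rw [if_neg, PowerSeries.coeff_zero_X_mul]
      rw [Finsupp.single_le_iff]
      simp
  | succ k =>
      have he : Finsupp.cons (k + 1) m - Finsupp.single (0 : Fin (ℓ+1)) 1 = Finsupp.cons k m := by
        ext i
        refine Fin.cases ?_ (fun j => ?_) i
        · simp [Finsupp.tsub_apply]
        · simp [Finsupp.tsub_apply, Finsupp.single_apply, (Fin.succ_ne_zero j).symm]
      rw [if_pos, PowerSeries.coeff_succ_X_mul, Tc_coeff, one_mul, he]
      rw [Finsupp.single_le_iff]
      simp

lemma Tc_Xsucc_mul (m : Fin ℓ →₀ ℕ) (j : Fin ℓ) (F : MvPowerSeries (Fin (ℓ + 1)) ℚ) :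
    Tc m (MvPowerSeries.X j.succ * F) =
      if Finsupp.single j 1 ≤ m then Tc (m - Finsupp.single j 1) F else 0 := by
  ext k
  rw [Tc_coeff]
  show MvPowerSeries.coeff _ (MvPowerSeries.monomial (Finsupp.single j.succ 1) 1 * F) = _
  rw [MvPowerSeries.coeff_monomial_mul]
  have hle : Finsupp.single j.succ 1 ≤ Finsupp.cons k m ↔ Finsupp.single j 1 ≤ m := by
    rw [Finsupp.single_le_iff, Finsupp.single_le_iff, Finsupp.cons_succ]
  by_cases h : Finsupp.single j 1 ≤ m
  · have he : Finsupp.cons k m - Finsupp.single j.succ 1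
        = Finsupp.cons k (m - Finsupp.single j 1) := by
      ext i
      refine Fin.cases ?_ (fun j' => ?_) i
      · simp [Finsupp.tsub_apply, Finsupp.single_apply, Fin.succ_ne_zero j]
      · simp [Finsupp.tsub_apply, Finsupp.single_apply, Fin.succ_inj]
    rw [if_pos (hle.2 h), if_pos h, Tc_coeff, one_mul, he]
  · rw [if_neg (fun hc => h (hle.1 hc)), if_neg h]
    simp

/-- Total degree of an exponent in the `x`-variables. -/
def Dg (m : Fin ℓ →₀ ℕ) : ℕ := ∑ i, m i

lemma Dg_add (m₁ m₂ : Fin ℓ →₀ ℕ) : Dg (m₁ + m₂) = Dg m₁ + Dg m₂ := by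
  simp [Dg, Finset.sum_add_distrib]

lemma Dg_eq_zero_iff (m : Fin ℓ →₀ ℕ) : Dg m = 0 ↔ m = 0 := by
  constructor
  · intro h
    ext i
    have := Finset.sum_eq_zero_iff.1 h i (Finset.mem_univ i)
    simpa using this
  · rintro rfl; simp [Dg]

/-- `F` has rational `q`-expansions for all `x`-exponents of degree at most `d`. -/
def GoodB (d : ℕ) (F : MvPowerSeries (Fin (ℓ + 1)) ℚ) : Prop :=
  ∀ m : Fin ℓ →₀ ℕ, Dg m ≤ d → RationalPS (Tc m F)

namespace GoodB

lemma mono {d d' : ℕ} (h : d ≤ d') {F : MvPowerSeries (Fin (ℓ + 1)) ℚ}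
    (hF : GoodB d' F) : GoodB d F := fun m hm => hF m (le_trans hm h)

lemma one (d : ℕ) : GoodB d (1 : MvPowerSeries (Fin (ℓ + 1)) ℚ) := by
  intro m _
  rw [Tc_one]
  split <;> [exact RatlPS.one; exact RatlPS.zero]

lemma add {d : ℕ} {F G : MvPowerSeries (Fin (ℓ + 1)) ℚ} (hF : GoodB d F) (hG : GoodB d G) :
    GoodB d (F + G) := fun m hm => by
  rw [Tc_add]; exact RatlPS.add (hF m hm) (hG m hm)

lemma neg {d : ℕ} {F : MvPowerSeries (Fin (ℓ + 1)) ℚ} (hF : GoodB d F) : GoodB d (-F) :=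
  fun m hm => by rw [Tc_neg]; exact RatlPS.neg (hF m hm)

lemma sub {d : ℕ} {F G : MvPowerSeries (Fin (ℓ + 1)) ℚ} (hF : GoodB d F) (hG : GoodB d G) :
    GoodB d (F - G) := fun m hm => by
  rw [Tc_sub]; exact RatlPS.sub (hF m hm) (hG m hm)

lemma mul {d : ℕ} {F G : MvPowerSeries (Fin (ℓ + 1)) ℚ} (hF : GoodB d F) (hG : GoodB d G) :
    GoodB d (F * G) := by
  intro m hm
  rw [Tc_mul]
  refine RatlPS.sum fun p hp => ?_
  rw [Finset.HasAntidiagonal.mem_antidiagonal] at hp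
  have h1 : Dg p.1 ≤ d := le_trans (by rw [← hp, Dg_add]; omega) hm
  have h2 : Dg p.2 ≤ d := le_trans (by rw [← hp, Dg_add]; omega) hm
  exact RatlPS.mul (hF p.1 h1) (hG p.2 h2)

lemma prod {d : ℕ} {s : Finset α} {f : α → MvPowerSeries (Fin (ℓ + 1)) ℚ}
    (h : ∀ i ∈ s, GoodB d (f i)) : GoodB d (∏ i ∈ s, f i) := by
  classical
  induction s using Finset.cons_induction with
  | empty => simpa using one d
  | cons i s hi ih =>
      rw [Finset.prod_cons]
      exact mul (h i (Finset.mem_cons_self i s)) (ih fun j hj => h j (Finset.mem_cons.2 (Or.inr hj)))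

lemma X0_mul {d : ℕ} {F : MvPowerSeries (Fin (ℓ + 1)) ℚ} (hF : GoodB d F) :
    GoodB d (MvPowerSeries.X 0 * F) := by
  intro m hm
  rw [Tc_X0_mul]
  exact RatlPS.mul RatlPS.X (hF m hm)

lemma Xsucc_mul {d : ℕ} {F : MvPowerSeries (Fin (ℓ + 1)) ℚ} (j : Fin ℓ) (hF : GoodB d F) :
    GoodB (d + 1) (MvPowerSeries.X j.succ * F) := by
  intro m hm
  rw [Tc_Xsucc_mul]
  by_cases h : Finsupp.single j 1 ≤ m
  · rw [if_pos h]
    refine hF _ ?_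
    have : m - Finsupp.single j 1 + Finsupp.single j 1 = m := tsub_add_cancel_of_le h
    have hD := congrArg Dg this
    rw [Dg_add] at hD
    have hsing : Dg (Finsupp.single j 1 : Fin ℓ →₀ ℕ) = 1 := by
      simp [Dg, Finsupp.single_apply]
    omega
  · rw [if_neg h]
    exact RatlPS.zero

end GoodB

lemma Tc0_mul (F G : MvPowerSeries (Fin (ℓ + 1)) ℚ) :
    Tc 0 (F * G) = Tc 0 F * Tc 0 G := by
  rw [Tc_mul, Finsupp.antidiagonal_zero, Finset.sum_singleton]

lemma Tc0_prod_one {s : Finset α} {f : α → MvPowerSeries (Fin (ℓ + 1)) ℚ}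
    (h : ∀ i ∈ s, Tc 0 (f i) = 1) : Tc 0 (∏ i ∈ s, f i) = 1 := by
  classical
  induction s using Finset.cons_induction with
  | empty => simp [Tc_one]
  | cons i s hi ih =>
      rw [Finset.prod_cons, Tc0_mul, h i (Finset.mem_cons_self i s),
        ih fun j hj => h j (Finset.mem_cons.2 (Or.inr hj)), one_mul]

lemma one_sub_X_ne : (1 - Polynomial.X : Polynomial ℚ) ≠ 0 := by
  intro h
  have := congrArg (fun p => Polynomial.coeff p 0) h
  simp at this

lemma coe_one_sub_X : (((1 - Polynomial.X : Polynomial ℚ)) : PowerSeries ℚ)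
    = 1 - PowerSeries.X := by
  rw [Polynomial.coe_sub, Polynomial.coe_one, Polynomial.coe_X]

lemma t_good (t : MvPowerSeries (Fin (ℓ + 1)) ℚ)
    (heq' : -(MvPowerSeries.X 0) *
        ((1 - t) * ∏ m : Fin ℓ, (1 - MvPowerSeries.X m.succ * t)) = t) :
    ∀ d, GoodB d t := by
  set Q : MvPowerSeries (Fin (ℓ + 1)) ℚ := ∏ m : Fin ℓ, (1 - MvPowerSeries.X m.succ * t)
    with hQdef
  have hQ0 : Tc 0 Q = 1 := by
    refine Tc0_prod_one fun j _ => ?_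
    rw [Tc_sub, Tc_one, if_pos rfl, Tc_Xsucc_mul, if_neg, sub_zero]
    rw [Finsupp.single_le_iff]
    simp
  intro d
  induction d with
  | zero =>
      intro m hm
      have hm0 : m = 0 := (Dg_eq_zero_iff m).1 (Nat.le_zero.1 hm)
      subst hm0
      have e1 : Tc 0 t = -(PowerSeries.X * ((1 - Tc 0 t) * 1)) := by
        conv_lhs => rw [← heq']
        rw [neg_mul, Tc_neg, Tc_X0_mul, Tc0_mul, Tc_sub, Tc_one, if_pos rfl, hQ0]
      have e2 : Tc 0 t * ((1 - Polynomial.X : Polynomial ℚ) : PowerSeries ℚ)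
          = -PowerSeries.X := by
        rw [coe_one_sub_X]
        linear_combination e1
      exact RatlPS.cancel_poly one_sub_X_ne e2 (RatlPS.neg RatlPS.X)
  | succ d ih =>
      intro m hm
      by_cases hmd : Dg m ≤ d
      · exact ih m hmd
      have hm0 : m ≠ 0 := by
        intro h; subst h; simp [Dg] at hmd
      have hQg : GoodB (d + 1) Q := by
        refine GoodB.prod fun j _ => GoodB.sub (GoodB.one _) (GoodB.Xsucc_mul j ih)
      have hmem : (m, (0 : Fin ℓ →₀ ℕ)) ∈ Finset.HasAntidiagonal.antidiagonal m := by
        rw [Finset.HasAntidiagonal.mem_antidiagonal, add_zero]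
      set S : PowerSeries ℚ :=
        ∑ p ∈ (Finset.HasAntidiagonal.antidiagonal m).erase (m, 0), Tc p.1 (1 - t) * Tc p.2 Q with hSdef
      have hSrat : RationalPS S := by
        refine RatlPS.sum fun p hp => ?_
        have hpne := Finset.ne_of_mem_erase hp
        have hpsum := Finset.HasAntidiagonal.mem_antidiagonal.1 (Finset.mem_of_mem_erase hp)
        have hp2ne : p.2 ≠ 0 := by
          intro h2
          apply hpne
          have : p.1 = m := by rw [← hpsum, h2, add_zero]
          rw [Prod.ext_iff]; exact ⟨this, h2⟩
        have hD : Dg p.1 + Dg p.2 = Dg m := by rw [← Dg_add, hpsum]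
        have hp2pos : 1 ≤ Dg p.2 := by
          rcases Nat.eq_zero_or_pos (Dg p.2) with h | h
          · exact absurd ((Dg_eq_zero_iff _).1 h) hp2ne
          · exact h
        have h1 : Dg p.1 ≤ d := by omega
        refine RatlPS.mul ?_ (hQg p.2 (by omega))
        rw [Tc_sub]
        exact RatlPS.sub ((GoodB.one d) p.1 h1) (ih p.1 h1)
      have e1 : Tc m t = -(PowerSeries.X * ((-(Tc m t)) * 1 + S)) := by
        conv_lhs => rw [← heq']
        rw [neg_mul, Tc_neg, Tc_X0_mul, Tc_mul, ← Finset.add_sum_erase _ _ hmem, hQ0]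
        rw [Tc_sub, Tc_one, if_neg hm0, zero_sub]
      have e2 : Tc m t * ((1 - Polynomial.X : Polynomial ℚ) : PowerSeries ℚ)
          = -(PowerSeries.X * S) := by
        rw [coe_one_sub_X]
        linear_combination e1
      exact RatlPS.cancel_poly one_sub_X_ne e2 (RatlPS.neg (RatlPS.mul RatlPS.X hSrat))

/-- Rationality for all coefficient extractions. -/
def GoodAll (F : MvPowerSeries (Fin (ℓ + 1)) ℚ) : Prop :=
  ∀ m : Fin ℓ →₀ ℕ, RationalPS (Tc m F)

namespace GoodAll

lemma of_goodB {F : MvPowerSeries (Fin (ℓ + 1)) ℚ} (h : ∀ d, GoodB d F) : GoodAll F :=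
  fun m => h (Dg m) m le_rfl

lemma goodB {F : MvPowerSeries (Fin (ℓ + 1)) ℚ} (h : GoodAll F) (d : ℕ) : GoodB d F :=
  fun m _ => h m

lemma one : GoodAll (1 : MvPowerSeries (Fin (ℓ + 1)) ℚ) :=
  of_goodB GoodB.one

lemma add {F G : MvPowerSeries (Fin (ℓ + 1)) ℚ} (hF : GoodAll F) (hG : GoodAll G) :
    GoodAll (F + G) := of_goodB fun d => GoodB.add (hF.goodB d) (hG.goodB d)

lemma sub {F G : MvPowerSeries (Fin (ℓ + 1)) ℚ} (hF : GoodAll F) (hG : GoodAll G) :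
    GoodAll (F - G) := of_goodB fun d => GoodB.sub (hF.goodB d) (hG.goodB d)

lemma mul {F G : MvPowerSeries (Fin (ℓ + 1)) ℚ} (hF : GoodAll F) (hG : GoodAll G) :
    GoodAll (F * G) := of_goodB fun d => GoodB.mul (hF.goodB d) (hG.goodB d)

lemma prod {s : Finset α} {f : α → MvPowerSeries (Fin (ℓ + 1)) ℚ}
    (h : ∀ i ∈ s, GoodAll (f i)) : GoodAll (∏ i ∈ s, f i) :=
  of_goodB fun d => GoodB.prod fun i hi => (h i hi).goodB d

lemma pow {F : MvPowerSeries (Fin (ℓ + 1)) ℚ} (hF : GoodAll F) (n : ℕ) : GoodAll (F ^ n) := by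
  induction n with
  | zero => simpa using one
  | succ n ih => rw [pow_succ]; exact mul ih hF

end GoodAll

lemma good_inv (u : (MvPowerSeries (Fin (ℓ + 1)) ℚ)ˣ) (h : GoodAll (u : MvPowerSeries (Fin (ℓ + 1)) ℚ)) :
    GoodAll ((u⁻¹ : (MvPowerSeries (Fin (ℓ + 1)) ℚ)ˣ) : MvPowerSeries (Fin (ℓ + 1)) ℚ) := by
  have huv : (u : MvPowerSeries (Fin (ℓ + 1)) ℚ) * ((u⁻¹ : _ˣ) : MvPowerSeries (Fin (ℓ + 1)) ℚ) = 1 := u.mul_inv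
  have h00 : Tc 0 (u : MvPowerSeries (Fin (ℓ + 1)) ℚ) * Tc 0 ((u⁻¹ : _ˣ) : MvPowerSeries (Fin (ℓ + 1)) ℚ) = 1 := by
    rw [← Tc0_mul, huv, Tc_one, if_pos rfl]
  have hT0ne : Tc 0 (u : MvPowerSeries (Fin (ℓ + 1)) ℚ) ≠ 0 := by
    intro h0
    rw [h0, zero_mul] at h00
    exact zero_ne_one h00
  refine GoodAll.of_goodB ?_
  intro d
  induction d with
  | zero =>
      intro m hm
      have hm0 : m = 0 := (Dg_eq_zero_iff m).1 (Nat.le_zero.1 hm)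
      subst hm0
      refine RatlPS.cancel (G := Tc 0 (u : MvPowerSeries (Fin (ℓ + 1)) ℚ)) ?_ (h 0) hT0ne
      rw [mul_comm, h00]
      exact RatlPS.one
  | succ d ih =>
      intro m hm
      by_cases hmd : Dg m ≤ d
      · exact ih m hmd
      have hm0 : m ≠ 0 := by
        intro hh; subst hh; simp [Dg] at hmd
      have hmem : ((0 : Fin ℓ →₀ ℕ), m) ∈ Finset.HasAntidiagonal.antidiagonal m := by
        rw [Finset.HasAntidiagonal.mem_antidiagonal, zero_add]
      set S : PowerSeries ℚ :=
        ∑ p ∈ (Finset.HasAntidiagonal.antidiagonal m).erase (0, m),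
          Tc p.1 (u : MvPowerSeries (Fin (ℓ + 1)) ℚ) *
          Tc p.2 ((u⁻¹ : _ˣ) : MvPowerSeries (Fin (ℓ + 1)) ℚ) with hSdef
      have hSrat : RationalPS S := by
        refine RatlPS.sum fun p hp => ?_
        have hpne := Finset.ne_of_mem_erase hp
        have hpsum := Finset.HasAntidiagonal.mem_antidiagonal.1 (Finset.mem_of_mem_erase hp)
        have hp1ne : p.1 ≠ 0 := by
          intro h1
          apply hpne
          have : p.2 = m := by rw [← hpsum, h1, zero_add]
          rw [Prod.ext_iff]; exact ⟨h1, this⟩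
        have hD : Dg p.1 + Dg p.2 = Dg m := by rw [← Dg_add, hpsum]
        have hp1pos : 1 ≤ Dg p.1 := by
          rcases Nat.eq_zero_or_pos (Dg p.1) with hz | hz
          · exact absurd ((Dg_eq_zero_iff _).1 hz) hp1ne
          · exact hz
        exact RatlPS.mul (h p.1) (ih p.2 (by omega))
      have e1 : (0 : PowerSeries ℚ)
          = Tc 0 (u : MvPowerSeries (Fin (ℓ + 1)) ℚ) *
              Tc m ((u⁻¹ : _ˣ) : MvPowerSeries (Fin (ℓ + 1)) ℚ) + S := by
        have := congrArg (Tc m) huv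
        rw [Tc_mul, Tc_one, if_neg hm0, ← Finset.add_sum_erase _ _ hmem] at this
        exact this.symm
      refine RatlPS.cancel (G := Tc 0 (u : MvPowerSeries (Fin (ℓ + 1)) ℚ)) ?_ (h 0) hT0ne
      have : Tc m ((u⁻¹ : _ˣ) : MvPowerSeries (Fin (ℓ + 1)) ℚ) *
          Tc 0 (u : MvPowerSeries (Fin (ℓ + 1)) ℚ) = -S := by linear_combination -e1
      rw [this]
      exact RatlPS.neg hSrat

lemma good_zpow (u : (MvPowerSeries (Fin (ℓ + 1)) ℚ)ˣ)
    (h : GoodAll (u : MvPowerSeries (Fin (ℓ + 1)) ℚ)) (z : ℤ) :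
    GoodAll ((u ^ z : (MvPowerSeries (Fin (ℓ + 1)) ℚ)ˣ) : MvPowerSeries (Fin (ℓ + 1)) ℚ) := by
  have hpow : ∀ n : ℕ, GoodAll ((u ^ n : (MvPowerSeries (Fin (ℓ + 1)) ℚ)ˣ) : MvPowerSeries (Fin (ℓ + 1)) ℚ) := by
    intro n
    rw [Units.val_pow_eq_pow_val]
    exact h.pow n
  rcases z with n | n
  · rw [Int.ofNat_eq_coe, zpow_natCast]
    exact hpow n
  · rw [zpow_negSucc]
    exact good_inv _ (hpow (n + 1))


lemma specAt_eq_Tc0 (G : MvPowerSeries (Fin (ℓ + 1)) ℚ) : specAt 0 G = Tc 0 G := by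
  ext k
  have hs : Finsupp.single (0 : Fin (ℓ + 1)) k = Finsupp.cons k (0 : Fin ℓ →₀ ℕ) := by
    ext i
    refine Fin.cases ?_ (fun j => ?_) i
    · simp
    · simp [Finsupp.single_apply, (Fin.succ_ne_zero j).symm]
  rw [specAt, Tc_coeff, PowerSeries.coeff_mk, hs]

lemma Tc_pderiv (m : Fin ℓ →₀ ℕ) (j : Fin ℓ) (F : MvPowerSeries (Fin (ℓ + 1)) ℚ) :
    Tc m (pderivAt j.succ F) = ((m j + 1 : ℕ) : ℚ) • Tc (m + Finsupp.single j 1) F := by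
  ext k
  rw [Tc_coeff, PowerSeries.coeff_smul, Tc_coeff]
  have hcons : Finsupp.cons k m + Finsupp.single j.succ 1
      = Finsupp.cons k (m + Finsupp.single j 1) := by
    ext i
    refine Fin.cases ?_ (fun j' => ?_) i
    · simp [Finsupp.single_apply, (Fin.succ_ne_zero j).symm, Fin.succ_ne_zero j]
    · simp [Finsupp.single_apply, Fin.succ_inj]
  show ((Finsupp.cons k m) j.succ + 1 : ℕ) * MvPowerSeries.coeff
      (Finsupp.cons k m + Finsupp.single j.succ 1) F = _
  rw [hcons, Finsupp.cons_succ]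
  rfl

lemma good_pderiv {F : MvPowerSeries (Fin (ℓ + 1)) ℚ} (j : Fin ℓ) (hF : GoodAll F) :
    GoodAll (pderivAt j.succ F) := fun m => by
  rw [Tc_pderiv]
  exact RatlPS.smul _ (hF _)

lemma good_foldl (L : List (Fin ℓ)) {F : MvPowerSeries (Fin (ℓ + 1)) ℚ} (hF : GoodAll F) :
    GoodAll (L.foldl (fun F i => pderivAt i.succ F) F) := by
  induction L generalizing F with
  | nil => exact hF
  | cons i L ih => exact ih (good_pderiv i hF)


/-- With `t ∈ ℚ[[q, x]]` solving `−q = t/((1−t)∏(1−x_m t))`, `t(0)=0`,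
and `W = ∏ (1 − x_i t)^{−a_i} (1−t)^{−b} (1+t)^{−c}`, every iterated partial derivative
`∂^{k_1}_{x_1} ⋯ ∂^{k_ℓ}_{x_ℓ} W |_{x=0}` (encoded by a finite list of differentiations in
the `x`-variables) is a rational function of `q`. -/
theorem lagrange_derivatives_rational (ℓ : ℕ) (a : Fin ℓ → ℤ) (b c : ℤ)
    (t : MvPowerSeries (Fin (ℓ + 1)) ℚ)
    (ht0 : MvPowerSeries.constantCoeff t = 0)
    (u1 u2 : (MvPowerSeries (Fin (ℓ + 1)) ℚ)ˣ)
    (ui : Fin ℓ → (MvPowerSeries (Fin (ℓ + 1)) ℚ)ˣ)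
    (hu1 : (u1 : MvPowerSeries (Fin (ℓ + 1)) ℚ) = 1 - t)
    (hu2 : (u2 : MvPowerSeries (Fin (ℓ + 1)) ℚ) = 1 + t)
    (hui : ∀ m : Fin ℓ,
      (ui m : MvPowerSeries (Fin (ℓ + 1)) ℚ) = 1 - MvPowerSeries.X m.succ * t)
    (heq : -(MvPowerSeries.X 0) *
        ((u1 : MvPowerSeries (Fin (ℓ + 1)) ℚ) *
          ∏ m : Fin ℓ, (ui m : MvPowerSeries (Fin (ℓ + 1)) ℚ)) = t)
    (W : MvPowerSeries (Fin (ℓ + 1)) ℚ)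
    (hW : W = (((∏ m : Fin ℓ, (ui m) ^ (-(a m))) * u1 ^ (-b) * u2 ^ (-c) :
        (MvPowerSeries (Fin (ℓ + 1)) ℚ)ˣ) : MvPowerSeries (Fin (ℓ + 1)) ℚ)) :
    ∀ L : List (Fin ℓ),
      RationalPS (specAt 0 (L.foldl (fun F i => pderivAt i.succ F) W)) := by
  have heq' : -(MvPowerSeries.X 0) *
      ((1 - t) * ∏ m : Fin ℓ, (1 - MvPowerSeries.X m.succ * t)) = t := by
    rw [show (∏ m : Fin ℓ, (1 - MvPowerSeries.X m.succ * t))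
        = ∏ m : Fin ℓ, (ui m : MvPowerSeries (Fin (ℓ + 1)) ℚ)
      from Finset.prod_congr rfl fun m _ => (hui m).symm, ← hu1]
    exact heq
  have ht : GoodAll t := fun m => t_good t heq' (Dg m) m le_rfl
  have hXt : ∀ j : Fin ℓ, GoodAll (MvPowerSeries.X j.succ * t) := by
    intro j m
    exact (GoodB.Xsucc_mul j (t_good t heq' (Dg m))) m (Nat.le_succ _)
  have hgu1 : GoodAll (u1 : MvPowerSeries (Fin (ℓ + 1)) ℚ) := by
    rw [hu1]; exact GoodAll.sub GoodAll.one ht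
  have hgu2 : GoodAll (u2 : MvPowerSeries (Fin (ℓ + 1)) ℚ) := by
    rw [hu2]; exact GoodAll.add GoodAll.one ht
  have hgui : ∀ m : Fin ℓ, GoodAll (ui m : MvPowerSeries (Fin (ℓ + 1)) ℚ) := by
    intro m
    rw [hui m]; exact GoodAll.sub GoodAll.one (hXt m)
  have hgW : GoodAll W := by
    rw [hW, Units.val_mul, Units.val_mul]
    refine GoodAll.mul (GoodAll.mul ?_ (good_zpow u1 hgu1 (-b))) (good_zpow u2 hgu2 (-c))
    rw [show ((∏ m : Fin ℓ, (ui m) ^ (-(a m)) : (MvPowerSeries (Fin (ℓ + 1)) ℚ)ˣ) :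
          MvPowerSeries (Fin (ℓ + 1)) ℚ)
        = ∏ m : Fin ℓ, ((ui m ^ (-(a m)) : (MvPowerSeries (Fin (ℓ + 1)) ℚ)ˣ) :
            MvPowerSeries (Fin (ℓ + 1)) ℚ)
      from map_prod (Units.coeHom _) _ _]
    exact GoodAll.prod fun m _ => good_zpow (ui m) (hgui m) (-(a m))
  intro L
  rw [specAt_eq_Tc0]
  exact good_foldl L hgW 0
end

section
/- For each k ≥ 0, the derivative (∂^k A/∂x^k)|_{x=0} of the series A = (1 − t^2 x)/(1 − t^2), with t defined implicitly by q = −t/((1−t)(1−tx)) and t(0)=0, has the form P_k(q)/((1−q)^{2k−2} (1−2q)^{k+1}) for some polynomial P_k with rational coefficients. -/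
namespace Aux
open Finset MvPowerSeries

variable {n : ℕ} (i i0 : Fin n)

lemma pderivAt_coeff (F : MvPowerSeries (Fin n) ℚ) (e : Fin n →₀ ℕ) :
    MvPowerSeries.coeff e (pderivAt i F)
      = ((e i + 1 : ℕ) : ℚ) * MvPowerSeries.coeff (e + Finsupp.single i 1) F := rfl

lemma pderivAt_add (F G : MvPowerSeries (Fin n) ℚ) :
    pderivAt i (F + G) = pderivAt i F + pderivAt i G := by
  ext e; simp [pderivAt_coeff, mul_add]

lemma pderivAt_neg (F : MvPowerSeries (Fin n) ℚ) : pderivAt i (-F) = -pderivAt i F := by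
  ext e; simp [pderivAt_coeff]

lemma pderivAt_sub (F G : MvPowerSeries (Fin n) ℚ) :
    pderivAt i (F - G) = pderivAt i F - pderivAt i G := by
  ext e; simp [pderivAt_coeff, mul_sub]

lemma pderivAt_zero : pderivAt i (0 : MvPowerSeries (Fin n) ℚ) = 0 := by
  ext e; simp [pderivAt_coeff]

lemma pderivAt_mul (F G : MvPowerSeries (Fin n) ℚ) :
    pderivAt i (F * G) = pderivAt i F * G + F * pderivAt i G := by
  classical
  ext e
  set δ : Fin n →₀ ℕ := Finsupp.single i 1 with hδ
  have key1 : ∑ p ∈ Finset.HasAntidiagonal.antidiagonal (e + δ),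
      ((p.1 i : ℚ)) * (MvPowerSeries.coeff p.1 F * MvPowerSeries.coeff p.2 G)
      = MvPowerSeries.coeff e (pderivAt i F * G) := by
    rw [MvPowerSeries.coeff_mul]
    rw [← Finset.sum_filter_of_ne (p := fun p => p.1 i ≠ 0)
      (by intro x hx hfx; intro h0; apply hfx; rw [h0]; push_cast; ring)]
    refine Finset.sum_nbij' (fun p => (p.1 - δ, p.2)) (fun p => (p.1 + δ, p.2)) ?_ ?_ ?_ ?_ ?_
    · rintro ⟨a, b⟩ hab
      simp only [Finset.mem_filter, Finset.HasAntidiagonal.mem_antidiagonal] at hab ⊢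
      obtain ⟨h1, h2⟩ := hab
      have hle : δ ≤ a := by
        rw [hδ, Finsupp.single_le_iff]; omega
      have : a - δ + δ + b = e + δ := by rw [tsub_add_cancel_of_le hle]; exact h1
      have := this
      rw [add_right_comm] at this
      exact add_right_cancel this
    · rintro ⟨a, b⟩ hab
      simp only [Finset.mem_filter, Finset.HasAntidiagonal.mem_antidiagonal] at hab ⊢
      constructor
      · rw [add_right_comm, hab]
      · simp [hδ, Finsupp.add_apply, Finsupp.single_eq_same]
    · rintro ⟨a, b⟩ hab
      simp only [Finset.mem_filter, Finset.HasAntidiagonal.mem_antidiagonal] at hab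
      have hle : δ ≤ a := by rw [hδ, Finsupp.single_le_iff]; omega
      simp [tsub_add_cancel_of_le hle]
    · rintro ⟨a, b⟩ _; simp
    · rintro ⟨a, b⟩ hab
      simp only [Finset.mem_filter, Finset.HasAntidiagonal.mem_antidiagonal] at hab
      obtain ⟨h1, h2⟩ := hab
      have hle : δ ≤ a := by rw [hδ, Finsupp.single_le_iff]; omega
      rw [pderivAt_coeff]
      have h3 : (a - δ) i = a i - 1 := by simp [hδ, Finsupp.tsub_apply]
      rw [h3, tsub_add_cancel_of_le hle]
      have : a i - 1 + 1 = a i := by omega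
      rw [this]; ring
  have key2 : ∑ p ∈ Finset.HasAntidiagonal.antidiagonal (e + δ),
      ((p.2 i : ℚ)) * (MvPowerSeries.coeff p.1 F * MvPowerSeries.coeff p.2 G)
      = MvPowerSeries.coeff e (F * pderivAt i G) := by
    rw [MvPowerSeries.coeff_mul]
    rw [← Finset.sum_filter_of_ne (p := fun p => p.2 i ≠ 0)
      (by intro x hx hfx; intro h0; apply hfx; rw [h0]; push_cast; ring)]
    refine Finset.sum_nbij' (fun p => (p.1, p.2 - δ)) (fun p => (p.1, p.2 + δ)) ?_ ?_ ?_ ?_ ?_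
    · rintro ⟨a, b⟩ hab
      simp only [Finset.mem_filter, Finset.HasAntidiagonal.mem_antidiagonal] at hab ⊢
      obtain ⟨h1, h2⟩ := hab
      have hle : δ ≤ b := by rw [hδ, Finsupp.single_le_iff]; omega
      have : a + (b - δ) + δ = e + δ := by
        rw [add_assoc, tsub_add_cancel_of_le hle]; exact h1
      exact add_right_cancel this
    · rintro ⟨a, b⟩ hab
      simp only [Finset.mem_filter, Finset.HasAntidiagonal.mem_antidiagonal] at hab ⊢
      constructor
      · rw [← add_assoc, hab]
      · simp [hδ, Finsupp.add_apply, Finsupp.single_eq_same]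
    · rintro ⟨a, b⟩ hab
      simp only [Finset.mem_filter, Finset.HasAntidiagonal.mem_antidiagonal] at hab
      have hle : δ ≤ b := by rw [hδ, Finsupp.single_le_iff]; omega
      simp [tsub_add_cancel_of_le hle]
    · rintro ⟨a, b⟩ _; simp
    · rintro ⟨a, b⟩ hab
      simp only [Finset.mem_filter, Finset.HasAntidiagonal.mem_antidiagonal] at hab
      obtain ⟨h1, h2⟩ := hab
      have hle : δ ≤ b := by rw [hδ, Finsupp.single_le_iff]; omega
      rw [pderivAt_coeff]
      have h3 : (b - δ) i = b i - 1 := by simp [hδ, Finsupp.tsub_apply]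
      rw [h3, tsub_add_cancel_of_le hle]
      have : b i - 1 + 1 = b i := by omega
      rw [this]; ring
  rw [map_add, ← key1, ← key2, pderivAt_coeff, MvPowerSeries.coeff_mul, Finset.mul_sum,
    ← Finset.sum_add_distrib]
  refine Finset.sum_congr rfl ?_
  rintro ⟨a, b⟩ hab
  simp only [Finset.HasAntidiagonal.mem_antidiagonal] at hab
  have h5 : a i + b i = e i + 1 := by
    have := congrArg (fun f => f i) hab
    simpa [hδ, Finsupp.add_apply, Finsupp.single_eq_same] using this
  have h6 : ((e i : ℚ) + 1) = (a i : ℚ) + (b i : ℚ) := by exact_mod_cast h5.symm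
  push_cast
  rw [h6]; ring

lemma pderivAt_nsmul (m : ℕ) (F : MvPowerSeries (Fin n) ℚ) :
    pderivAt i (m • F) = m • pderivAt i F := by
  induction m with
  | zero => simp [pderivAt_zero]
  | succ m ih => rw [succ_nsmul, succ_nsmul, pderivAt_add, ih]

lemma pderivAt_sum {α : Type*} (s : Finset α) (f : α → MvPowerSeries (Fin n) ℚ) :
    pderivAt i (∑ a ∈ s, f a) = ∑ a ∈ s, pderivAt i (f a) := by
  classical
  induction s using Finset.induction_on with
  | empty => simp [pderivAt_zero]
  | insert _ _ h ih => rw [Finset.sum_insert h, Finset.sum_insert h, pderivAt_add, ih]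

lemma pderivAt_one : pderivAt i (1 : MvPowerSeries (Fin n) ℚ) = 0 := by
  ext e
  rw [pderivAt_coeff, MvPowerSeries.coeff_one]
  have : e + Finsupp.single i 1 ≠ 0 := by
    intro h
    have := congrArg (fun f => f i) h
    simp [Finsupp.add_apply, Finsupp.single_eq_same] at this
  simp [this]

lemma pderivAt_X_self : pderivAt i (MvPowerSeries.X i : MvPowerSeries (Fin n) ℚ) = 1 := by
  classical
  ext e
  rw [pderivAt_coeff, MvPowerSeries.coeff_X, MvPowerSeries.coeff_one]
  by_cases h : e = 0
  · subst h; simp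
  · have h2 : e + Finsupp.single i 1 ≠ Finsupp.single i 1 := by
      intro hc
      exact h (by simpa using add_right_cancel (hc.trans (zero_add _).symm))
    simp [h2, h]

lemma pderivAt_X_ne (j : Fin n) (hij : j ≠ i) :
    pderivAt i (MvPowerSeries.X j : MvPowerSeries (Fin n) ℚ) = 0 := by
  classical
  ext e
  rw [pderivAt_coeff, MvPowerSeries.coeff_X]
  have h2 : e + Finsupp.single i 1 ≠ Finsupp.single j 1 := by
    intro hc
    have := congrArg (fun f => f i) hc
    simp [Finsupp.add_apply, Finsupp.single_eq_same, Finsupp.single_apply,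
      (by simpa [eq_comm] using hij : ¬ j = i)] at this
  simp [h2]

lemma specAt_coeff (F : MvPowerSeries (Fin n) ℚ) (k : ℕ) :
    PowerSeries.coeff k (specAt i0 F) = MvPowerSeries.coeff (Finsupp.single i0 k) F :=
  PowerSeries.coeff_mk _ _

lemma specAt_add (F G : MvPowerSeries (Fin n) ℚ) :
    specAt i0 (F + G) = specAt i0 F + specAt i0 G := by
  ext k; simp [specAt_coeff]

lemma specAt_neg (F : MvPowerSeries (Fin n) ℚ) : specAt i0 (-F) = -specAt i0 F := by
  ext k; simp [specAt_coeff]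

lemma specAt_sub (F G : MvPowerSeries (Fin n) ℚ) :
    specAt i0 (F - G) = specAt i0 F - specAt i0 G := by
  ext k; simp [specAt_coeff]

lemma specAt_zero : specAt i0 (0 : MvPowerSeries (Fin n) ℚ) = 0 := by
  ext k; simp [specAt_coeff]

lemma specAt_nsmul (m : ℕ) (F : MvPowerSeries (Fin n) ℚ) :
    specAt i0 (m • F) = m • specAt i0 F := by
  induction m with
  | zero => simp [specAt_zero]
  | succ m ih => rw [succ_nsmul, succ_nsmul, specAt_add, ih]

lemma specAt_one : specAt i0 (1 : MvPowerSeries (Fin n) ℚ) = 1 := by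
  ext k
  simp only [specAt_coeff, MvPowerSeries.coeff_one, PowerSeries.coeff_one]
  by_cases h : k = 0 <;> simp [h, Finsupp.single_eq_zero]

lemma specAt_mul (F G : MvPowerSeries (Fin n) ℚ) :
    specAt i0 (F * G) = specAt i0 F * specAt i0 G := by
  ext k
  rw [PowerSeries.coeff_mul, specAt_coeff, MvPowerSeries.coeff_mul]
  rw [Finsupp.antidiagonal_single, Finset.sum_map]
  simp [specAt_coeff]

lemma specAt_sum {α : Type*} (s : Finset α) (f : α → MvPowerSeries (Fin n) ℚ) :
    specAt i0 (∑ a ∈ s, f a) = ∑ a ∈ s, specAt i0 (f a) := by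
  ext k; simp [specAt_coeff]

lemma specAt_X_self : specAt i0 (MvPowerSeries.X i0) = PowerSeries.X := by
  classical
  ext k
  rw [specAt_coeff, MvPowerSeries.coeff_X, PowerSeries.coeff_X]
  by_cases h : k = 1
  · simp [h]
  · have : Finsupp.single i0 k ≠ Finsupp.single i0 1 := by
      intro hc; exact h (by simpa using congrArg (fun f => f i0) hc)
    simp [h, this]

lemma specAt_X_ne (j : Fin n) (hj : j ≠ i0) : specAt i0 (MvPowerSeries.X j) = 0 := by
  classical
  ext k
  rw [specAt_coeff, MvPowerSeries.coeff_X]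
  have : Finsupp.single i0 k ≠ Finsupp.single j 1 := by
    intro hc
    have := congrArg (fun f => f j) hc
    simp [Finsupp.single_apply, (by simpa [eq_comm] using hj : ¬ i0 = j)] at this
  simp [this]


lemma pderivAt_iter_sub (k : ℕ) (F G : MvPowerSeries (Fin n) ℚ) :
    (pderivAt i)^[k] (F - G) = (pderivAt i)^[k] F - (pderivAt i)^[k] G := by
  induction k generalizing F G with
  | zero => rfl
  | succ k ih => rw [Function.iterate_succ_apply, Function.iterate_succ_apply,
      Function.iterate_succ_apply, pderivAt_sub, ih]

lemma pderivAt_iter_neg (k : ℕ) (F : MvPowerSeries (Fin n) ℚ) :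
    (pderivAt i)^[k] (-F) = -(pderivAt i)^[k] F := by
  induction k generalizing F with
  | zero => rfl
  | succ k ih => rw [Function.iterate_succ_apply, Function.iterate_succ_apply,
      pderivAt_neg, ih]

lemma pderivAt_iter_zero (k : ℕ) :
    (pderivAt i)^[k] (0 : MvPowerSeries (Fin n) ℚ) = 0 := by
  induction k with
  | zero => rfl
  | succ k ih => rw [Function.iterate_succ_apply, pderivAt_zero, ih]

lemma pderivAt_iter_one (k : ℕ) (hk : 1 ≤ k) :
    (pderivAt i)^[k] (1 : MvPowerSeries (Fin n) ℚ) = 0 := by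
  obtain ⟨m, rfl⟩ := Nat.exists_eq_add_of_le hk
  rw [add_comm, Function.iterate_add_apply, Function.iterate_one, pderivAt_one,
    pderivAt_iter_zero]

lemma pderivAt_iter_nsmul (k m : ℕ) (F : MvPowerSeries (Fin n) ℚ) :
    (pderivAt i)^[k] (m • F) = m • (pderivAt i)^[k] F := by
  induction k generalizing F with
  | zero => rfl
  | succ k ih => rw [Function.iterate_succ_apply, Function.iterate_succ_apply,
      pderivAt_nsmul, ih]

lemma pderivAt_iter_mul (k : ℕ) (F G : MvPowerSeries (Fin n) ℚ) :
    (pderivAt i)^[k] (F * G) =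
      ∑ j ∈ range (k + 1), k.choose j • ((pderivAt i)^[k - j] F * (pderivAt i)^[j] G) := by
  induction k with
  | zero => simp
  | succ k IH =>
    calc
      (pderivAt i)^[k + 1] (F * G) =
          pderivAt i (∑ j ∈ range k.succ,
              k.choose j • ((pderivAt i)^[k - j] F * (pderivAt i)^[j] G)) := by
        rw [Function.iterate_succ_apply', IH]
      _ = (∑ j ∈ range k.succ,
            k.choose j • ((pderivAt i)^[k - j + 1] F * (pderivAt i)^[j] G)) +
          ∑ j ∈ range k.succ,
            k.choose j • ((pderivAt i)^[k - j] F * (pderivAt i)^[j + 1] G) := by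
        rw [pderivAt_sum]
        simp_rw [pderivAt_nsmul, pderivAt_mul, Function.iterate_succ_apply',
          smul_add, sum_add_distrib]
      _ = (∑ j ∈ range k.succ,
                k.choose j.succ • ((pderivAt i)^[k - j] F * (pderivAt i)^[j + 1] G)) +
              1 • ((pderivAt i)^[k + 1] F * (pderivAt i)^[0] G) +
            ∑ j ∈ range k.succ,
              k.choose j • ((pderivAt i)^[k - j] F * (pderivAt i)^[j + 1] G) := ?_
      _ = ((∑ j ∈ range k.succ,
              k.choose j • ((pderivAt i)^[k - j] F * (pderivAt i)^[j + 1] G)) +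
              ∑ j ∈ range k.succ,
                k.choose j.succ • ((pderivAt i)^[k - j] F * (pderivAt i)^[j + 1] G)) +
            1 • ((pderivAt i)^[k + 1] F * (pderivAt i)^[0] G) := by
        rw [add_comm, add_assoc]
      _ = (∑ j ∈ range k.succ,
              (k + 1).choose (j + 1) •
                ((pderivAt i)^[k + 1 - (j + 1)] F * (pderivAt i)^[j + 1] G)) +
            1 • ((pderivAt i)^[k + 1] F * (pderivAt i)^[0] G) := by
        simp_rw [Nat.choose_succ_succ, Nat.succ_sub_succ, add_smul, sum_add_distrib]
      _ = ∑ j ∈ range k.succ.succ,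
            k.succ.choose j • ((pderivAt i)^[k.succ - j] F * (pderivAt i)^[j] G) := by
        rw [sum_range_succ' _ k.succ, Nat.choose_zero_right, tsub_zero]
    congr
    refine (sum_range_succ' _ _).trans (congr_arg₂ (· + ·) ?_ ?_)
    · rw [sum_range_succ, Nat.choose_succ_self, zero_smul, add_zero]
      refine sum_congr rfl fun j hj => ?_
      rw [mem_range] at hj
      congr
      omega
    · rw [Nat.choose_zero_right, tsub_zero]


lemma pderivAt_X_mul (j : Fin n) (hij : j ≠ i) (F : MvPowerSeries (Fin n) ℚ) :
    pderivAt i (MvPowerSeries.X j * F) = MvPowerSeries.X j * pderivAt i F := by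
  rw [pderivAt_mul, pderivAt_X_ne i j hij, zero_mul, zero_add]

lemma pderivAt_iter_X_mul (k : ℕ) (j : Fin n) (hij : j ≠ i) (F : MvPowerSeries (Fin n) ℚ) :
    (pderivAt i)^[k] (MvPowerSeries.X j * F)
      = MvPowerSeries.X j * (pderivAt i)^[k] F := by
  induction k generalizing F with
  | zero => rfl
  | succ k ih => rw [Function.iterate_succ_apply, Function.iterate_succ_apply,
      pderivAt_X_mul i j hij, ih]

lemma pderivAt_iter_add (k : ℕ) (F G : MvPowerSeries (Fin n) ℚ) :
    (pderivAt i)^[k] (F + G) = (pderivAt i)^[k] F + (pderivAt i)^[k] G := by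
  induction k generalizing F G with
  | zero => rfl
  | succ k ih => rw [Function.iterate_succ_apply, Function.iterate_succ_apply,
      Function.iterate_succ_apply, pderivAt_add, ih]

lemma pderivAt_iter_mul_X (k : ℕ) (F : MvPowerSeries (Fin n) ℚ) :
    (pderivAt i)^[k + 1] (F * MvPowerSeries.X i)
      = (pderivAt i)^[k + 1] F * MvPowerSeries.X i + (k + 1) • (pderivAt i)^[k] F := by
  induction k generalizing F with
  | zero => simp [pderivAt_mul, pderivAt_X_self]
  | succ k ih =>
    calc (pderivAt i)^[k + 1 + 1] (F * MvPowerSeries.X i)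
        = (pderivAt i)^[k + 1] (pderivAt i (F * MvPowerSeries.X i)) :=
          Function.iterate_succ_apply _ _ _
      _ = (pderivAt i)^[k + 1] (pderivAt i F * MvPowerSeries.X i + F) := by
          rw [pderivAt_mul, pderivAt_X_self, mul_one]
      _ = (pderivAt i)^[k + 1] (pderivAt i F * MvPowerSeries.X i)
            + (pderivAt i)^[k + 1] F := pderivAt_iter_add i _ _ _
      _ = ((pderivAt i)^[k + 1] (pderivAt i F) * MvPowerSeries.X i
            + (k + 1) • (pderivAt i)^[k] (pderivAt i F)) + (pderivAt i)^[k + 1] F := by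
          rw [ih]
      _ = (pderivAt i)^[k + 1 + 1] F * MvPowerSeries.X i
            + (k + 1 + 1) • (pderivAt i)^[k + 1] F := by
          rw [← Function.iterate_succ_apply, ← Function.iterate_succ_apply]
          conv_rhs => rw [succ_nsmul]
          rw [add_assoc]


section Main

local notation "D" => pderivAt (1 : Fin 2)
local notation "σ" => specAt (0 : Fin 2)

noncomputable def TT (t : MvPowerSeries (Fin 2) ℚ) (k : ℕ) : PowerSeries ℚ :=
  specAt (0 : Fin 2) ((pderivAt (1 : Fin 2))^[k] t)

variable (t : MvPowerSeries (Fin 2) ℚ)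

lemma fin_ne10 : (1 : Fin 2) ≠ 0 := by decide
lemma fin_ne01 : (0 : Fin 2) ≠ 1 := by decide

lemma sig_B0 : σ (D^[0] (1 - t)) = 1 - TT t 0 := by
  rw [Function.iterate_zero, id_eq, specAt_sub, specAt_one]; rfl

lemma sig_B (l : ℕ) : σ (D^[l + 1] (1 - t)) = -TT t (l + 1) := by
  rw [pderivAt_iter_sub, pderivAt_iter_one _ _ (by omega), specAt_sub, specAt_zero]
  show 0 - TT t (l+1) = _
  ring

lemma sig_C0 : σ (D^[0] (1 - t * MvPowerSeries.X 1)) = 1 := by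
  rw [Function.iterate_zero, id_eq, specAt_sub, specAt_one, specAt_mul,
    specAt_X_ne _ _ fin_ne10, mul_zero, sub_zero]

lemma sig_C (l : ℕ) : σ (D^[l + 1] (1 - t * MvPowerSeries.X 1))
    = -(((l + 1 : ℕ)) : PowerSeries ℚ) * TT t l := by
  rw [pderivAt_iter_sub, pderivAt_iter_one _ _ (by omega), pderivAt_iter_mul_X,
    specAt_sub, specAt_zero, specAt_add, specAt_mul, specAt_X_ne _ _ fin_ne10,
    mul_zero, specAt_nsmul, nsmul_eq_mul]
  show 0 - (0 + _) = _
  simp only [TT]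
  push_cast
  ring

lemma T_base (heq : MvPowerSeries.X (0 : Fin 2) * (1 - t) * (1 - t * MvPowerSeries.X 1) = -t) :
    TT t 0 * (1 - PowerSeries.X) = -PowerSeries.X := by
  have h := congrArg σ heq
  rw [specAt_mul, specAt_mul, specAt_X_self, specAt_neg] at h
  have h1 : σ (1 - t) = 1 - TT t 0 := sig_B0 t
  have h2 : σ (1 - t * MvPowerSeries.X 1) = 1 := by
    rw [specAt_sub, specAt_one, specAt_mul, specAt_X_ne _ _ fin_ne10, mul_zero, sub_zero]
  rw [h1, h2, mul_one] at h
  have h3 : σ t = TT t 0 := rfl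
  rw [h3] at h
  linear_combination h


lemma specAt_natCast (c : ℕ) :
    σ ((c : MvPowerSeries (Fin 2) ℚ)) = (c : PowerSeries ℚ) := by
  induction c with
  | zero => simpa using specAt_zero (0 : Fin 2)
  | succ c ih =>
    push_cast
    rw [specAt_add, specAt_one, ih]

lemma TT_def (k : ℕ) : σ (D^[k] t) = TT t k := rfl

lemma T_rec (heq : MvPowerSeries.X (0 : Fin 2) * (1 - t) * (1 - t * MvPowerSeries.X 1) = -t)
    (m : ℕ) :
    TT t (m + 1) * (1 - PowerSeries.X)
      = PowerSeries.X * (((m + 1 : ℕ)) : PowerSeries ℚ) * ((1 - TT t 0) * TT t m)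
        - PowerSeries.X * ∑ j ∈ Finset.range m,
            ((((m + 1).choose (j + 1) * (j + 1) : ℕ)) : PowerSeries ℚ)
              * (TT t (m - j) * TT t j) := by
  have h0 : D^[m + 1] (MvPowerSeries.X 0 * ((1 - t) * (1 - t * MvPowerSeries.X 1)))
      = -(D^[m + 1] t) := by
    rw [← mul_assoc, heq, pderivAt_iter_neg]
  rw [pderivAt_iter_X_mul _ _ _ fin_ne01, pderivAt_iter_mul] at h0
  have h := congrArg σ h0
  rw [specAt_mul, specAt_X_self, specAt_sum, specAt_neg, TT_def] at h
  simp only [nsmul_eq_mul, specAt_mul, specAt_natCast] at h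
  rw [Finset.sum_range_succ'] at h
  rw [Finset.sum_range_succ] at h
  have hsum : ∑ j ∈ Finset.range m, (((m + 1).choose (j + 1) : ℕ) : PowerSeries ℚ)
        * (σ (D^[m + 1 - (j + 1)] (1 - t)) * σ (D^[j + 1] (1 - t * MvPowerSeries.X 1)))
      = ∑ j ∈ Finset.range m,
          ((((m + 1).choose (j + 1) * (j + 1) : ℕ)) : PowerSeries ℚ)
            * (TT t (m - j) * TT t j) := by
    refine Finset.sum_congr rfl fun j hj => ?_
    rw [Finset.mem_range] at hj
    have e1 : m + 1 - (j + 1) = (m - j - 1) + 1 := by omega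
    rw [e1, sig_B, sig_C]
    have e2 : m - j - 1 + 1 = m - j := by omega
    rw [e2]
    push_cast
    ring
  rw [hsum] at h
  have e3 : m + 1 - (m + 1) = 0 := by omega
  rw [e3, sig_B0, sig_C] at h
  have e4 : m + 1 - 0 = m + 1 := by omega
  rw [e4, sig_B, sig_C0, Nat.choose_self, Nat.choose_zero_right, Nat.cast_one] at h
  linear_combination h


noncomputable def SS (t : MvPowerSeries (Fin 2) ℚ) (j : ℕ) : PowerSeries ℚ :=
  specAt (0 : Fin 2) ((pderivAt (1 : Fin 2))^[j] (t * t))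

lemma SS_def (j : ℕ) : σ (D^[j] (t * t)) = SS t j := rfl

lemma SS_eq (j : ℕ) : SS t j
    = ∑ a ∈ Finset.range (j + 1),
        ((j.choose a : ℕ) : PowerSeries ℚ) * (TT t (j - a) * TT t a) := by
  rw [← SS_def, pderivAt_iter_mul, specAt_sum]
  simp only [nsmul_eq_mul, specAt_mul, specAt_natCast, TT_def]

lemma SS_zero : SS t 0 = TT t 0 * TT t 0 := by
  rw [← SS_def, Function.iterate_zero, id_eq, specAt_mul]
  rfl

lemma poly_coe_sum {α : Type*} (s : Finset α) (f : α → Polynomial ℚ) :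
    ((∑ a ∈ s, f a : Polynomial ℚ) : PowerSeries ℚ)
      = ∑ a ∈ s, ((f a : Polynomial ℚ) : PowerSeries ℚ) := by
  simp only [← Polynomial.coeToPowerSeries.ringHom_apply, map_sum]

lemma poly_coe_two :
    ((2 : Polynomial ℚ) : PowerSeries ℚ) = 2 := by
  rw [← Polynomial.coeToPowerSeries.ringHom_apply, map_ofNat]

lemma poly_coe_natCast (c : ℕ) :
    (((c : ℕ) : Polynomial ℚ) : PowerSeries ℚ) = (c : PowerSeries ℚ) := by
  rw [← Polynomial.coeToPowerSeries.ringHom_apply, map_natCast]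

lemma key_one_sub_two_X
    (heq : MvPowerSeries.X (0 : Fin 2) * (1 - t) * (1 - t * MvPowerSeries.X 1) = -t) :
    (1 - SS t 0) * (1 - PowerSeries.X) ^ 2 = 1 - 2 * PowerSeries.X := by
  have h1 := SS_zero t
  have h2 := T_base t heq
  linear_combination (-(1 - PowerSeries.X)^2) * h1
    + (PowerSeries.X - TT t 0 * (1 - PowerSeries.X)) * h2

variable (Aser : MvPowerSeries (Fin 2) ℚ)

noncomputable def AAf (B : MvPowerSeries (Fin 2) ℚ) (k : ℕ) : PowerSeries ℚ :=
  specAt (0 : Fin 2) ((pderivAt (1 : Fin 2))^[k] B)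

lemma AA_def (k : ℕ) : σ (D^[k] Aser) = AAf Aser k := rfl

lemma A_base (hA : Aser * (1 - t ^ 2) = 1 - t ^ 2 * MvPowerSeries.X 1) :
    AAf Aser 0 * (1 - SS t 0) = 1 := by
  rw [pow_two] at hA
  have h := congrArg σ hA
  simp only [specAt_mul, specAt_sub, specAt_one, specAt_X_ne _ _ fin_ne10, mul_zero,
    sub_zero] at h
  have e1 : AAf Aser 0 = specAt 0 Aser := rfl
  have e2 : SS t 0 = specAt 0 t * specAt 0 t := by
    rw [← SS_def, Function.iterate_zero, id_eq, specAt_mul]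
  rw [e1, e2]
  exact h

lemma A_rec (hA : Aser * (1 - t ^ 2) = 1 - t ^ 2 * MvPowerSeries.X 1) (m : ℕ) :
    AAf Aser (m + 1) * (1 - SS t 0)
      = ∑ j ∈ Finset.range (m + 1),
          (((m + 1).choose (j + 1) : ℕ) : PowerSeries ℚ) * (AAf Aser (m - j) * SS t (j + 1))
        - (((m + 1 : ℕ)) : PowerSeries ℚ) * SS t m := by
  rw [pow_two] at hA
  have h0 := congrArg (fun F => σ (D^[m + 1] F)) hA
  rw [pderivAt_iter_mul, pderivAt_iter_sub, pderivAt_iter_one _ _ (by omega),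
    pderivAt_iter_mul_X, specAt_sum, specAt_sub, specAt_zero, specAt_add, specAt_mul,
    specAt_X_ne _ _ fin_ne10, mul_zero, specAt_nsmul, nsmul_eq_mul, SS_def] at h0
  simp only [nsmul_eq_mul, specAt_mul, specAt_natCast] at h0
  rw [Finset.sum_range_succ'] at h0
  have hz : σ (D^[0] (1 - t * t)) = 1 - SS t 0 := by
    rw [Function.iterate_zero, id_eq, specAt_sub, specAt_one]
    rfl
  have hsum : ∑ j ∈ Finset.range (m + 1),
        (((m + 1).choose (j + 1) : ℕ) : PowerSeries ℚ)
          * (σ (D^[m + 1 - (j + 1)] Aser) * σ (D^[j + 1] (1 - t * t)))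
      = ∑ j ∈ Finset.range (m + 1),
          -((((m + 1).choose (j + 1) : ℕ) : PowerSeries ℚ)
            * (AAf Aser (m - j) * SS t (j + 1))) := by
    refine Finset.sum_congr rfl fun j hj => ?_
    rw [Finset.mem_range] at hj
    have e1 : m + 1 - (j + 1) = m - j := by omega
    rw [e1, pderivAt_iter_sub, pderivAt_iter_one _ _ (by omega), specAt_sub, specAt_zero,
      SS_def, AA_def]
    ring
  rw [hsum, Finset.sum_neg_distrib, hz, Nat.choose_zero_right, Nat.cast_one, AA_def] at h0
  have e4 : m + 1 - 0 = m + 1 := by omega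
  rw [e4] at h0
  linear_combination h0

lemma exists_u
    (heq : MvPowerSeries.X (0 : Fin 2) * (1 - t) * (1 - t * MvPowerSeries.X 1) = -t) :
    ∀ k : ℕ, ∃ u : Polynomial ℚ,
      TT t k * (1 - PowerSeries.X) ^ (2 * k + 1) = (u : PowerSeries ℚ) := by
  intro k
  induction k using Nat.strong_induction_on with
  | _ k ih =>
    match k, ih with
    | 0, _ =>
      refine ⟨-Polynomial.X, ?_⟩
      rw [Polynomial.coe_neg, Polynomial.coe_X]
      simpa using T_base t heq
    | (m + 1), ih =>
      choose uf huf using fun l (h : l < m + 1) => ih l h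
      set U : ℕ → Polynomial ℚ := fun l => if h : l < m + 1 then uf l h else 0 with hUdef
      have hU : ∀ l, l < m + 1 → TT t l * (1 - PowerSeries.X) ^ (2 * l + 1)
          = ((U l : Polynomial ℚ) : PowerSeries ℚ) := by
        intro l h
        simp only [hUdef, dif_pos h]
        exact huf l h
      refine ⟨Polynomial.X * (((m + 1 : ℕ)) : Polynomial ℚ) * U m
        - Polynomial.X * ∑ j ∈ Finset.range m,
            ((((m + 1).choose (j + 1) * (j + 1) : ℕ)) : Polynomial ℚ) * (U (m - j) * U j), ?_⟩
      have hrec := T_rec t heq m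
      have hT0 : (1 - TT t 0) * (1 - PowerSeries.X) = 1 := by
        linear_combination -(T_base t heq)
      have hm := hU m (by omega)
      have hcoe : ((Polynomial.X * (((m + 1 : ℕ)) : Polynomial ℚ) * U m
          - Polynomial.X * ∑ j ∈ Finset.range m,
              ((((m + 1).choose (j + 1) * (j + 1) : ℕ)) : Polynomial ℚ)
                * (U (m - j) * U j) : Polynomial ℚ) : PowerSeries ℚ)
          = PowerSeries.X * (((m + 1 : ℕ)) : PowerSeries ℚ) * ((U m : Polynomial ℚ) : PowerSeries ℚ)
            - PowerSeries.X * ∑ j ∈ Finset.range m,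
                ((((m + 1).choose (j + 1) * (j + 1) : ℕ)) : PowerSeries ℚ)
                  * (((U (m - j) : Polynomial ℚ) : PowerSeries ℚ)
                    * ((U j : Polynomial ℚ) : PowerSeries ℚ)) := by
        rw [Polynomial.coe_sub, Polynomial.coe_mul, Polynomial.coe_mul, Polynomial.coe_mul,
          Polynomial.coe_X, poly_coe_natCast, poly_coe_sum]
        congr 1
        refine congrArg _ (Finset.sum_congr rfl fun j hj => ?_)
        rw [Polynomial.coe_mul, Polynomial.coe_mul, poly_coe_natCast]
      rw [hcoe]
      have hsum2 : (∑ j ∈ Finset.range m,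
            ((((m + 1).choose (j + 1) * (j + 1) : ℕ)) : PowerSeries ℚ)
              * (TT t (m - j) * TT t j)) * (1 - PowerSeries.X) ^ (2 * m + 2)
          = ∑ j ∈ Finset.range m,
              ((((m + 1).choose (j + 1) * (j + 1) : ℕ)) : PowerSeries ℚ)
                * (((U (m - j) : Polynomial ℚ) : PowerSeries ℚ)
                  * ((U j : Polynomial ℚ) : PowerSeries ℚ)) := by
        rw [Finset.sum_mul]
        refine Finset.sum_congr rfl fun j hj => ?_
        rw [Finset.mem_range] at hj
        obtain ⟨i, hi⟩ : ∃ i, m - j = i := ⟨m - j, rfl⟩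
        have hij : i + j = m := by omega
        have hiu := hU i (by omega)
        have hju := hU j (by omega)
        rw [hi]
        have hpow : ((1 - PowerSeries.X : PowerSeries ℚ)) ^ (2 * m + 2)
            = (1 - PowerSeries.X) ^ (2 * i + 1) * (1 - PowerSeries.X) ^ (2 * j + 1) := by
          rw [← pow_add]
          congr 1
          omega
        rw [hpow]
        linear_combination ((((m + 1).choose (j + 1) * (j + 1) : ℕ) : PowerSeries ℚ)
            * TT t j * (1 - PowerSeries.X) ^ (2 * j + 1)) * hiu
          + ((((m + 1).choose (j + 1) * (j + 1) : ℕ) : PowerSeries ℚ)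
            * ((U i : Polynomial ℚ) : PowerSeries ℚ)) * hju
      calc TT t (m + 1) * (1 - PowerSeries.X) ^ (2 * (m + 1) + 1)
          = (TT t (m + 1) * (1 - PowerSeries.X)) * (1 - PowerSeries.X) ^ (2 * m + 2) := by
            rw [show 2 * (m + 1) + 1 = 1 + (2 * m + 2) by ring, pow_add, pow_one]
            ring
        _ = (PowerSeries.X * (((m + 1 : ℕ)) : PowerSeries ℚ) * ((1 - TT t 0) * TT t m)
              - PowerSeries.X * ∑ j ∈ Finset.range m,
                  ((((m + 1).choose (j + 1) * (j + 1) : ℕ)) : PowerSeries ℚ)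
                    * (TT t (m - j) * TT t j)) * (1 - PowerSeries.X) ^ (2 * m + 2) := by
            rw [hrec]
        _ = PowerSeries.X * (((m + 1 : ℕ)) : PowerSeries ℚ)
              * ((U m : Polynomial ℚ) : PowerSeries ℚ)
            - PowerSeries.X * ∑ j ∈ Finset.range m,
                ((((m + 1).choose (j + 1) * (j + 1) : ℕ)) : PowerSeries ℚ)
                  * (((U (m - j) : Polynomial ℚ) : PowerSeries ℚ)
                    * ((U j : Polynomial ℚ) : PowerSeries ℚ)) := by
            linear_combination (PowerSeries.X * (((m + 1 : ℕ)) : PowerSeries ℚ) * TT t m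
                * (1 - PowerSeries.X) ^ (2 * m + 1)) * hT0
              + (PowerSeries.X * (((m + 1 : ℕ)) : PowerSeries ℚ)) * hm
              + (-PowerSeries.X) * hsum2


lemma exists_s (u : ℕ → Polynomial ℚ)
    (hu : ∀ k, TT t k * (1 - PowerSeries.X) ^ (2 * k + 1) = ((u k : Polynomial ℚ) : PowerSeries ℚ))
    (j : ℕ) :
    SS t j * (1 - PowerSeries.X) ^ (2 * j + 2)
      = ((∑ a ∈ Finset.range (j + 1),
          ((j.choose a : ℕ) : Polynomial ℚ) * (u (j - a) * u a) : Polynomial ℚ) : PowerSeries ℚ) := by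
  rw [SS_eq, Finset.sum_mul, poly_coe_sum]
  refine Finset.sum_congr rfl fun a ha => ?_
  rw [Finset.mem_range] at ha
  rw [Polynomial.coe_mul, Polynomial.coe_mul, poly_coe_natCast]
  obtain ⟨i, hi⟩ : ∃ i, j - a = i := ⟨_, rfl⟩
  have hia : i + a = j := by omega
  rw [hi]
  have hpow : ((1 - PowerSeries.X : PowerSeries ℚ)) ^ (2 * j + 2)
      = (1 - PowerSeries.X) ^ (2 * i + 1) * (1 - PowerSeries.X) ^ (2 * a + 1) := by
    rw [← pow_add]
    congr 1
    omega
  rw [hpow]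
  linear_combination (((j.choose a : ℕ) : PowerSeries ℚ) * TT t a
      * (1 - PowerSeries.X) ^ (2 * a + 1)) * hu i
    + (((j.choose a : ℕ) : PowerSeries ℚ) * ((u i : Polynomial ℚ) : PowerSeries ℚ)) * hu a

end Main
end Aux

open Aux

set_option linter.unusedVariables false

/-- With `A = (1 − t²x)/(1 − t²)` and `t` implicitly defined by
`q = −t/((1−t)(1−tx))`, `t(0,x)=0`, for every `k ≥ 0` the derivative `(∂^k A/∂x^k)|_{x=0}`
has the form `P_k(q)/((1−q)^{2k−2}(1−2q)^{k+1})` for some polynomial `P_k ∈ ℚ[q]`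
(the identity is stated with denominators cleared). -/
theorem example_A_series_all_derivatives
    (t A : MvPowerSeries (Fin 2) ℚ)
    (ht0 : ∀ e : Fin 2 →₀ ℕ, e 0 = 0 → MvPowerSeries.coeff e t = 0)
    (heq : MvPowerSeries.X (0 : Fin 2) * (1 - t) * (1 - t * MvPowerSeries.X 1) = -t)
    (hA : A * (1 - t ^ 2) = 1 - t ^ 2 * MvPowerSeries.X 1) :
    ∀ k : ℕ, ∃ P : Polynomial ℚ,
      specAt 0 ((pderivAt 1)^[k] A) * (1 - PowerSeries.X) ^ (2 * k) *
          (1 - 2 * PowerSeries.X) ^ (k + 1)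
        = (P : PowerSeries ℚ) * (1 - PowerSeries.X) ^ 2 := by
  obtain ⟨u, hu⟩ : ∃ u : ℕ → Polynomial ℚ, ∀ k,
      TT t k * (1 - PowerSeries.X) ^ (2 * k + 1) = ((u k : Polynomial ℚ) : PowerSeries ℚ) := by
    have h := exists_u t heq
    exact ⟨fun k => (h k).choose, fun k => (h k).choose_spec⟩
  set sv : ℕ → Polynomial ℚ := fun j => ∑ a ∈ Finset.range (j + 1),
      ((j.choose a : ℕ) : Polynomial ℚ) * (u (j - a) * u a) with hsvdef
  have hs : ∀ j, SS t j * (1 - PowerSeries.X) ^ (2 * j + 2)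
      = ((sv j : Polynomial ℚ) : PowerSeries ℚ) := fun j => exists_s t u hu j
  have hkey := key_one_sub_two_X t heq
  intro k
  induction k using Nat.strong_induction_on with
  | _ k ih =>
    match k, ih with
    | 0, _ =>
      refine ⟨1, ?_⟩
      rw [Polynomial.coe_one]
      have hb := A_base t A hA
      have e0 : specAt 0 ((pderivAt 1)^[0] A) = AAf A 0 := rfl
      rw [e0, pow_zero, mul_one, pow_one]
      linear_combination (-(AAf A 0)) * hkey + (1 - PowerSeries.X) ^ 2 * hb
    | (m + 1), ih =>
      choose Pf hPf using fun l (h : l < m + 1) => ih l h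
      set PF : ℕ → Polynomial ℚ := fun l => if h : l < m + 1 then Pf l h else 0 with hPFdef
      have hPF : ∀ l, l < m + 1 → AAf A l * (1 - PowerSeries.X) ^ (2 * l)
          * (1 - 2 * PowerSeries.X) ^ (l + 1) = ((PF l : Polynomial ℚ) : PowerSeries ℚ)
            * (1 - PowerSeries.X) ^ 2 := by
        intro l h
        simp only [hPFdef, dif_pos h]
        exact hPf l h
      have hrec := A_rec t A hA m
      refine ⟨∑ j ∈ Finset.range (m + 1), (((m + 1).choose (j + 1) : ℕ) : Polynomial ℚ)
          * (PF (m - j) * (sv (j + 1) * (1 - ((2 : ℕ) : Polynomial ℚ) * Polynomial.X) ^ j))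
        - (((m + 1 : ℕ)) : Polynomial ℚ)
          * (sv m * (1 - ((2 : ℕ) : Polynomial ℚ) * Polynomial.X) ^ (m + 1)), ?_⟩
      have e0 : specAt 0 ((pderivAt 1)^[m + 1] A) = AAf A (m + 1) := rfl
      rw [e0]
      have hcoe : ((∑ j ∈ Finset.range (m + 1), (((m + 1).choose (j + 1) : ℕ) : Polynomial ℚ)
          * (PF (m - j) * (sv (j + 1) * (1 - ((2 : ℕ) : Polynomial ℚ) * Polynomial.X) ^ j))
        - (((m + 1 : ℕ)) : Polynomial ℚ)
          * (sv m * (1 - ((2 : ℕ) : Polynomial ℚ) * Polynomial.X) ^ (m + 1))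
            : Polynomial ℚ) : PowerSeries ℚ)
          = ∑ j ∈ Finset.range (m + 1), (((m + 1).choose (j + 1) : ℕ) : PowerSeries ℚ)
              * (((PF (m - j) : Polynomial ℚ) : PowerSeries ℚ)
                * (((sv (j + 1) : Polynomial ℚ) : PowerSeries ℚ)
                  * (1 - 2 * PowerSeries.X) ^ j))
            - (((m + 1 : ℕ)) : PowerSeries ℚ)
              * (((sv m : Polynomial ℚ) : PowerSeries ℚ)
                * (1 - 2 * PowerSeries.X) ^ (m + 1)) := by
        rw [Polynomial.coe_sub, poly_coe_sum]
        congr 1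
        · refine Finset.sum_congr rfl fun j hj => ?_
          simp only [Polynomial.coe_mul, Polynomial.coe_pow, Polynomial.coe_sub,
            Polynomial.coe_one, Polynomial.coe_X, poly_coe_natCast, poly_coe_two,
            Nat.cast_ofNat]
        · simp only [Polynomial.coe_mul, Polynomial.coe_pow, Polynomial.coe_sub,
            Polynomial.coe_one, Polynomial.coe_X, poly_coe_natCast, poly_coe_two,
            Nat.cast_ofNat]
      rw [hcoe]
      have hsum3 : (∑ j ∈ Finset.range (m + 1),
            (((m + 1).choose (j + 1) : ℕ) : PowerSeries ℚ) * (AAf A (m - j) * SS t (j + 1)))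
              * ((1 - PowerSeries.X) ^ (2 * m + 4) * (1 - 2 * PowerSeries.X) ^ (m + 1))
          = (1 - PowerSeries.X) ^ 2 * ∑ j ∈ Finset.range (m + 1),
              (((m + 1).choose (j + 1) : ℕ) : PowerSeries ℚ)
                * (((PF (m - j) : Polynomial ℚ) : PowerSeries ℚ)
                  * (((sv (j + 1) : Polynomial ℚ) : PowerSeries ℚ)
                    * (1 - 2 * PowerSeries.X) ^ j)) := by
        rw [Finset.sum_mul, Finset.mul_sum]
        refine Finset.sum_congr rfl fun j hj => ?_
        rw [Finset.mem_range] at hj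
        obtain ⟨i, hi⟩ : ∃ i, m - j = i := ⟨_, rfl⟩
        have hij : i + j = m := by omega
        have hiP := hPF i (by omega)
        have hsj := hs (j + 1)
        rw [hi]
        have hpow1 : ((1 - PowerSeries.X : PowerSeries ℚ)) ^ (2 * m + 4)
            = (1 - PowerSeries.X) ^ (2 * i) * (1 - PowerSeries.X) ^ (2 * (j + 1) + 2) := by
          rw [← pow_add]
          congr 1
          omega
        have hpow2 : ((1 - 2 * PowerSeries.X : PowerSeries ℚ)) ^ (m + 1)
            = (1 - 2 * PowerSeries.X) ^ (i + 1) * (1 - 2 * PowerSeries.X) ^ j := by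
          rw [← pow_add]
          congr 1
          omega
        rw [hpow1, hpow2]
        linear_combination ((((m + 1).choose (j + 1) : ℕ) : PowerSeries ℚ) * SS t (j + 1)
            * (1 - PowerSeries.X) ^ (2 * (j + 1) + 2) * (1 - 2 * PowerSeries.X) ^ j) * hiP
          + ((((m + 1).choose (j + 1) : ℕ) : PowerSeries ℚ)
            * ((PF i : Polynomial ℚ) : PowerSeries ℚ) * (1 - PowerSeries.X) ^ 2
            * (1 - 2 * PowerSeries.X) ^ j) * hsj
      have klast : (((m + 1 : ℕ)) : PowerSeries ℚ) * SS t m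
            * ((1 - PowerSeries.X) ^ (2 * m + 4) * (1 - 2 * PowerSeries.X) ^ (m + 1))
          = (1 - PowerSeries.X) ^ 2 * ((((m + 1 : ℕ)) : PowerSeries ℚ)
            * (((sv m : Polynomial ℚ) : PowerSeries ℚ)
              * (1 - 2 * PowerSeries.X) ^ (m + 1))) := by
        linear_combination ((((m + 1 : ℕ)) : PowerSeries ℚ) * (1 - PowerSeries.X) ^ 2
          * (1 - 2 * PowerSeries.X) ^ (m + 1)) * hs m
      calc AAf A (m + 1) * (1 - PowerSeries.X) ^ (2 * (m + 1))
            * (1 - 2 * PowerSeries.X) ^ (m + 1 + 1)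
          = (AAf A (m + 1) * (1 - SS t 0))
              * ((1 - PowerSeries.X) ^ (2 * m + 4) * (1 - 2 * PowerSeries.X) ^ (m + 1)) := by
            linear_combination (-(AAf A (m + 1)) * (1 - PowerSeries.X) ^ (2 * m + 2)
              * (1 - 2 * PowerSeries.X) ^ (m + 1)) * hkey
        _ = (∑ j ∈ Finset.range (m + 1),
              (((m + 1).choose (j + 1) : ℕ) : PowerSeries ℚ) * (AAf A (m - j) * SS t (j + 1))
             - (((m + 1 : ℕ)) : PowerSeries ℚ) * SS t m)
              * ((1 - PowerSeries.X) ^ (2 * m + 4) * (1 - 2 * PowerSeries.X) ^ (m + 1)) := by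
            rw [hrec]
        _ = (∑ j ∈ Finset.range (m + 1), (((m + 1).choose (j + 1) : ℕ) : PowerSeries ℚ)
              * (((PF (m - j) : Polynomial ℚ) : PowerSeries ℚ)
                * (((sv (j + 1) : Polynomial ℚ) : PowerSeries ℚ)
                  * (1 - 2 * PowerSeries.X) ^ j))
            - (((m + 1 : ℕ)) : PowerSeries ℚ)
              * (((sv m : Polynomial ℚ) : PowerSeries ℚ)
                * (1 - 2 * PowerSeries.X) ^ (m + 1))) * (1 - PowerSeries.X) ^ 2 := by
            linear_combination hsum3 - klast
end
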